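/- arXiv:math/0511520 — 5 statements merged into one kernel-verified Lean document; each statement's English description precedes it below -/
import Mathlib

section
/- Let 0 < δ < 1, p ≥ 1 with α = δ - 1/p > 0, and set q = 1/δ. For a continuous h : [0,1] → ℝ with finite fractional Sobolev seminorm, the map ω(s,t) = |h|_{W^{δ,p};[s,t]}^q · (t-s)^{αq} is a super-additive control: ω(s,t) + ω(t,u) ≤ ω(s,u) for all 0 ≤ s ≤ t ≤ u ≤ 1. -/
/-!
With `θ = 1/(δp)`, which lies in `(0, 1)` because `α > 0`, the control is
`ω(s,t) = I(s,t)^θ (t-s)^(1-θ)`, where `I(s,t)` is the double integral over `[s,t]²`.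
The squares `[s,t]²` and `[t,u]²` meet only in a point and lie in `[s,u]²`, so `I` is
super-additive; and `(x, y) ↦ x^θ y^(1-θ)` is super-additive by Hölder's inequality.
-/

open MeasureTheory Set

theorem rpow_mul_rpow_one_sub_add_le {θ a b c d : ℝ} (hθ₀ : 0 < θ) (hθ₁ : θ < 1)
    (ha : 0 ≤ a) (hb : 0 ≤ b) (hc : 0 ≤ c) (hd : 0 ≤ d) :
    a ^ θ * b ^ (1 - θ) + c ^ θ * d ^ (1 - θ) ≤ (a + c) ^ θ * (b + d) ^ (1 - θ) := by
  have hθ' : 0 < 1 - θ := sub_pos.2 hθ₁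
  have holder := Real.inner_le_Lp_mul_Lq_of_nonneg Finset.univ
    (f := ![a ^ θ, c ^ θ]) (g := ![b ^ (1 - θ), d ^ (1 - θ)])
    (Real.HolderConjugate.inv_one_sub_inv hθ₀ hθ₁)
    (Fin.forall_fin_two.2 ⟨fun _ => Real.rpow_nonneg ha θ, fun _ => Real.rpow_nonneg hc θ⟩)
    (Fin.forall_fin_two.2 ⟨fun _ => Real.rpow_nonneg hb _, fun _ => Real.rpow_nonneg hd _⟩)
  simpa [Fin.sum_univ_two, ← Real.rpow_mul, ha, hb, hc, hd, hθ₀.ne', hθ'.ne'] using holder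

theorem setIntegral_Icc_prod_add_le {f : ℝ × ℝ → ℝ} {s t u : ℝ} (hst : s ≤ t) (htu : t ≤ u)
    (hf : IntegrableOn f (Icc s u ×ˢ Icc s u))
    (hf₀ : 0 ≤ᵐ[volume.restrict (Icc s u ×ˢ Icc s u)] f) :
    (∫ x in Icc s t ×ˢ Icc s t, f x) + ∫ x in Icc t u ×ˢ Icc t u, f x
      ≤ ∫ x in Icc s u ×ˢ Icc s u, f x := by
  have hsub₁ : Icc s t ×ˢ Icc s t ⊆ Icc s u ×ˢ Icc s u :=
    prod_mono (Icc_subset_Icc_right htu) (Icc_subset_Icc_right htu)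
  have hsub₂ : Icc t u ×ˢ Icc t u ⊆ Icc s u ×ˢ Icc s u :=
    prod_mono (Icc_subset_Icc_left hst) (Icc_subset_Icc_left hst)
  have hdisj : AEDisjoint volume (Icc s t ×ˢ Icc s t) (Icc t u ×ˢ Icc t u) := by
    refine measure_mono_null (fun x hx => ?_) (measure_singleton (t, t))
    simp only [mem_inter_iff, mem_prod, mem_Icc] at hx
    exact Prod.ext (by linarith) (by linarith)
  rw [← setIntegral_union₀ hdisj (measurableSet_Icc.prod measurableSet_Icc).nullMeasurableSet
    (hf.mono_set hsub₁) (hf.mono_set hsub₂)]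
  exact setIntegral_mono_set hf hf₀ (union_subset hsub₁ hsub₂).eventuallyLE

theorem stmt_3_general (δ p α q : ℝ) (hδ : 0 < δ) (hp : 1 ≤ p)
    (hα : α = δ - 1/p) (hα0 : 0 < α) (hq : q = 1/δ)
    (h : ℝ → ℝ)
    (hFin : IntegrableOn
      (fun x : ℝ × ℝ => |h x.2 - h x.1| ^ p / |x.2 - x.1| ^ (1 + δ * p))
      (Set.Icc (0:ℝ) 1 ×ˢ Set.Icc (0:ℝ) 1) volume)
    (S : ℝ → ℝ → ℝ)
    (hS : ∀ s t, S s t =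
      (∫ x in Set.Icc s t ×ˢ Set.Icc s t,
        |h x.2 - h x.1| ^ p / |x.2 - x.1| ^ (1 + δ * p)) ^ (1/p))
    (ω : ℝ → ℝ → ℝ)
    (hω : ∀ s t, ω s t = (S s t) ^ q * (t - s) ^ (α * q)) :
    ∀ s t u, 0 ≤ s → s ≤ t → t ≤ u → u ≤ 1 → ω s t + ω t u ≤ ω s u := by
  intro s t u hs hst htu hu
  have hp₀ : 0 < p := by linarith
  have hδp₁ : 1 < δ * p := by
    rw [hα, sub_pos, div_lt_iff₀ hp₀] at hα0
    exact hα0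
  set θ := 1 / (δ * p)
  have hθ₀ : 0 < θ := by positivity
  have hθ₁ : θ < 1 := (div_lt_one (by positivity)).2 hδp₁
  set I : ℝ → ℝ → ℝ := fun a b =>
    ∫ x in Icc a b ×ˢ Icc a b, |h x.2 - h x.1| ^ p / |x.2 - x.1| ^ (1 + δ * p)
  have hI₀ : ∀ a b, 0 ≤ I a b := fun a b => integral_nonneg fun x => by positivity
  have hωI : ∀ a b, ω a b = I a b ^ θ * (b - a) ^ (1 - θ) := by
    intro a b
    rw [hω, hS, ← Real.rpow_mul (hI₀ a b), hq, hα]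
    congr 2 <;> simp only [θ] <;> field_simp
  calc ω s t + ω t u ≤ (I s t + I t u) ^ θ * ((t - s) + (u - t)) ^ (1 - θ) := by
        rw [hωI, hωI]
        exact rpow_mul_rpow_one_sub_add_le hθ₀ hθ₁ (hI₀ s t) (by linarith) (hI₀ t u) (by linarith)
    _ ≤ I s u ^ θ * (u - s) ^ (1 - θ) := by
        rw [show t - s + (u - t) = u - s by ring]
        gcongr
        · exact Real.rpow_nonneg (by linarith) _
        · refine setIntegral_Icc_prod_add_le hst htu (hFin.mono_set ?_) ?_
          · exact prod_mono (Icc_subset_Icc hs hu) (Icc_subset_Icc hs hu)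
          · exact Filter.Eventually.of_forall fun x => by positivity
    _ = ω s u := (hωI s u).symm

/-- Super-additivity of the control `ω(s,t) = |h|_{W^{δ,p};[s,t]}^q (t-s)^{αq}`,
with `α = δ - 1/p > 0` and `q = 1/δ`. -/
theorem stmt_3 (δ p α q : ℝ) (hδ : 0 < δ) (hδ1 : δ < 1) (hp : 1 ≤ p)
    (hα : α = δ - 1/p) (hα0 : 0 < α) (hq : q = 1/δ)
    (h : ℝ → ℝ) (hcont : ContinuousOn h (Set.Icc 0 1))
    (hFin : IntegrableOn
      (fun x : ℝ × ℝ => |h x.2 - h x.1| ^ p / |x.2 - x.1| ^ (1 + δ * p))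
      (Set.Icc (0:ℝ) 1 ×ˢ Set.Icc (0:ℝ) 1) volume)
    (S : ℝ → ℝ → ℝ)
    (hS : ∀ s t, S s t =
      (∫ x in Set.Icc s t ×ˢ Set.Icc s t,
        |h x.2 - h x.1| ^ p / |x.2 - x.1| ^ (1 + δ * p)) ^ (1/p))
    (ω : ℝ → ℝ → ℝ)
    (hω : ∀ s t, ω s t = (S s t) ^ q * (t - s) ^ (α * q)) :
    ∀ s t u, 0 ≤ s → s ≤ t → t ≤ u → u ≤ 1 → ω s t + ω t u ≤ ω s u :=
  stmt_3_general δ p α q hδ hp hα hα0 hq h hFin S hS ω hω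
end

section
/- Let 0 < δ < 1, p ≥ 1 with α = δ - 1/p > 0, and q = 1/δ. There is a constant C = C(δ,p) such that for any continuous h : [0,1] → ℝ and any 0 ≤ a < b ≤ 1, the q-variation of h satisfies |h|_{q-var;[a,b]} ≤ C (b-a)^α |h|_{W^{δ,p};[a,b]}. In particular W^{δ,p}([0,1]) embeds continuously into C^{q-var}. -/
/-!
A Garsia–Rodemich–Rumsey argument. Write `E(s, t)` for the Gagliardo energy
`∫∫_{[s,t]²} |h v - h u|^p / |v - u|^(1 + δp)`. For nested intervals `J ⊆ I`, the averages of
`h` differ by at most `|I|^δ |J|^(-1/p) E(I)^(1/p)`: average `|h v - h u|` over `J × I` and apply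
Jensen's inequality. Along the dyadic intervals shrinking from `[s, t]` to an endpoint these
bounds form a geometric series with ratio `2^(1/p - δ) < 1`, which gives
`|h t - h s| ≤ C (t - s)^(δ - 1/p) E(s, t)^(1/p)`. Since `(δ - 1/p) q + q/p = 1`, Hölder's
inequality over a partition turns these bounds into the `q`-variation estimate: the lengths add
up to `b - a`, and the energies of the diagonal squares to at most `E(a, b)`.
-/

open MeasureTheory Set Filter Topology
open scoped ENNReal

theorem ENNReal.sum_rpow_mul_rpow_le {ι : Type*} (s : Finset ι) (u v : ι → ℝ≥0∞) {a b : ℝ}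
    (ha : 0 < a) (hb : 0 < b) (hab : a + b = 1) :
    ∑ i ∈ s, u i ^ a * v i ^ b ≤ (∑ i ∈ s, u i) ^ a * (∑ i ∈ s, v i) ^ b := by
  have hconj : (1 / a).HolderConjugate (1 / b) :=
    Real.holderConjugate_iff.2 ⟨by rw [lt_div_iff₀ ha]; linarith, by simpa using hab⟩
  simpa only [← ENNReal.rpow_mul, mul_one_div_cancel ha.ne', mul_one_div_cancel hb.ne',
    ENNReal.rpow_one, one_div_one_div] using
    ENNReal.inner_le_Lp_mul_Lq s (fun i ↦ u i ^ a) (fun i ↦ v i ^ b) hconj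

theorem ENNReal.rpow_sum_rpow_le_of_le_mul {ι : Type*} (s : Finset ι) (x u v : ι → ℝ≥0∞)
    (C : ℝ≥0∞) {q a b : ℝ} (hq : 0 < q) (ha : 0 < a) (hb : 0 < b) (habq : (a + b) * q = 1)
    (hx : ∀ i ∈ s, x i ≤ C * u i ^ a * v i ^ b) :
    (∑ i ∈ s, x i ^ q) ^ (1 / q) ≤ C * (∑ i ∈ s, u i) ^ a * (∑ i ∈ s, v i) ^ b := by
  have hsum : ∑ i ∈ s, x i ^ q ≤ C ^ q * ((∑ i ∈ s, u i) ^ (a * q) * (∑ i ∈ s, v i) ^ (b * q)) :=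
    calc ∑ i ∈ s, x i ^ q
        ≤ ∑ i ∈ s, C ^ q * (u i ^ (a * q) * v i ^ (b * q)) := by
          gcongr with i hi
          refine (ENNReal.rpow_le_rpow (hx i hi) hq.le).trans_eq ?_
          rw [ENNReal.mul_rpow_of_nonneg _ _ hq.le, ENNReal.mul_rpow_of_nonneg _ _ hq.le,
            ← ENNReal.rpow_mul, ← ENNReal.rpow_mul, mul_assoc]
      _ ≤ C ^ q * ((∑ i ∈ s, u i) ^ (a * q) * (∑ i ∈ s, v i) ^ (b * q)) := by
          rw [← Finset.mul_sum]
          gcongr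
          exact ENNReal.sum_rpow_mul_rpow_le s u v (by positivity) (by positivity)
            (by linarith)
  calc (∑ i ∈ s, x i ^ q) ^ (1 / q)
      ≤ (C ^ q * ((∑ i ∈ s, u i) ^ (a * q) * (∑ i ∈ s, v i) ^ (b * q))) ^ (1 / q) := by
        gcongr
    _ = C * (∑ i ∈ s, u i) ^ a * (∑ i ∈ s, v i) ^ b := by
        have hq' : 0 ≤ 1 / q := by positivity
        rw [ENNReal.mul_rpow_of_nonneg _ _ hq', ENNReal.mul_rpow_of_nonneg _ _ hq',
          ← ENNReal.rpow_mul, ← ENNReal.rpow_mul, ← ENNReal.rpow_mul, mul_one_div_cancel hq.ne',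
          mul_assoc, mul_one_div_cancel hq.ne', mul_assoc, mul_one_div_cancel hq.ne',
          ENNReal.rpow_one, mul_one, mul_one, mul_assoc]

theorem Monotone.sum_le_of_add_le {α : Type*} [Preorder α] (F : α → α → ℝ≥0∞)
    (hF : ∀ a b c, a ≤ b → b ≤ c → F a b + F b c ≤ F a c) :
    ∀ {n : ℕ} {t : Fin (n + 1) → α}, Monotone t →
      ∑ i : Fin n, F (t i.castSucc) (t i.succ) ≤ F (t 0) (t (Fin.last n))
  | 0, _, _ => by simp
  | n + 1, t, ht => by
    rw [Fin.sum_univ_castSucc]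
    have ih := Monotone.sum_le_of_add_le F hF (t := t ∘ Fin.castSucc)
      (ht.comp Fin.strictMono_castSucc.monotone)
    simp only [Function.comp_apply] at ih
    refine (add_le_add_left ih _).trans ?_
    rw [← Fin.succ_last]
    exact hF _ _ _ (ht (Fin.zero_le _)) (ht Fin.castSucc_lt_succ.le)

theorem lintegral_rpow_one_div_le {α : Type*} [MeasurableSpace α] (μ : Measure α)
    {g : α → ℝ≥0∞} (hg : AEMeasurable g μ) {p : ℝ} (hp : 1 ≤ p) :
    ∫⁻ a, g a ^ (1 / p) ∂μ ≤ (∫⁻ a, g a ∂μ) ^ (1 / p) * μ univ ^ (1 - 1 / p) := by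
  obtain rfl | hp1 := hp.eq_or_lt
  · simp
  have hp0 : 0 < p := one_pos.trans hp1
  have hconj : p.HolderConjugate (p / (p - 1)) :=
    Real.holderConjugate_iff.2 ⟨hp1, by field_simp; ring⟩
  have h := ENNReal.lintegral_mul_le_Lp_mul_Lq μ hconj (hg.pow_const (1 / p)) aemeasurable_const
    (g := fun _ ↦ 1)
  simpa only [Pi.mul_apply, mul_one, ← ENNReal.rpow_mul, one_div_mul_cancel hp0.ne',
    ENNReal.rpow_one, ENNReal.one_rpow, lintegral_one,
    show 1 / (p / (p - 1)) = 1 - 1 / p by field_simp] using h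

theorem setAverage_sub_setAverage_eq_inv_mul_setIntegral_prod {α : Type*} [MeasurableSpace α]
    {μ : Measure α} [SFinite μ] {f : α → ℝ} {s t : Set α} (hs₀ : μ s ≠ 0) (ht₀ : μ t ≠ 0)
    (hs : μ s ≠ ∞) (ht : μ t ≠ ∞)
    (hfs : IntegrableOn f s μ) (hft : IntegrableOn f t μ) :
    ⨍ y in t, f y ∂μ - ⨍ x in s, f x ∂μ =
      (μ.real s * μ.real t)⁻¹ * ∫ z in s ×ˢ t, (f z.2 - f z.1) ∂μ.prod μ := by
  have : IsFiniteMeasure (μ.restrict s) := isFiniteMeasure_restrict.2 hs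
  have : IsFiniteMeasure (μ.restrict t) := isFiniteMeasure_restrict.2 ht
  rw [← Measure.prod_restrict, integral_sub (hft.comp_snd _) (hfs.comp_fst _), integral_fun_snd,
    integral_fun_fst, setAverage_eq, setAverage_eq]
  simp only [measureReal_restrict_apply_univ, smul_eq_mul]
  have : μ.real s ≠ 0 := (ENNReal.toReal_pos hs₀ hs).ne'
  have : μ.real t ≠ 0 := (ENNReal.toReal_pos ht₀ ht).ne'
  field_simp

theorem ContinuousWithinAt.tendsto_setAverage_Icc {h : ℝ → ℝ} {K : Set ℝ} {w : ℝ}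
    (hh : ContinuousWithinAt h K w)
    {c d : ℕ → ℝ} (hcd : ∀ n, c n < d n) (hK : ∀ n, Icc (c n) (d n) ⊆ K)
    (hw : ∀ n, w ∈ Icc (c n) (d n)) (hlen : Tendsto (fun n ↦ d n - c n) atTop (𝓝 0))
    (hint : ∀ n, IntegrableOn h (Icc (c n) (d n))) :
    Tendsto (fun n ↦ ⨍ x in Icc (c n) (d n), h x) atTop (𝓝 (h w)) := by
  rw [Metric.tendsto_atTop]
  intro ε hε
  obtain ⟨η, hη, hball⟩ := Metric.continuousWithinAt_iff.1 hh (ε / 2) (half_pos hε)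
  obtain ⟨N, hN⟩ := Metric.tendsto_atTop.1 hlen η hη
  refine ⟨N, fun n hn ↦ ?_⟩
  have hnear : ∀ x ∈ Icc (c n) (d n), h x ∈ Metric.closedBall (h w) (ε / 2) := by
    intro x hx
    have hlen_n := hN n hn
    rw [Real.dist_eq, sub_zero] at hlen_n
    refine (hball (hK n hx) ?_).le
    rw [Real.dist_eq, abs_lt]
    constructor <;> linarith [(hw n).1, (hw n).2, hx.1, hx.2, le_abs_self (d n - c n)]
  have hvol : volume (Icc (c n) (d n)) ≠ 0 := by
    rw [Real.volume_Icc]; simpa using hcd n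
  have hmem := (convex_closedBall (h w) (ε / 2)).set_average_mem Metric.isClosed_closedBall hvol
    (by simp [Real.volume_Icc]) ((ae_restrict_iff' measurableSet_Icc).2 (.of_forall hnear))
    (hint n)
  exact (Metric.mem_closedBall.1 hmem).trans_lt (half_lt_self hε)

theorem div_two_pow_rpow_mul_div_two_pow_succ_rpow (L δ p : ℝ) (hL : 0 < L) (n : ℕ) :
    (L / 2 ^ n) ^ δ * (L / 2 ^ (n + 1)) ^ (-(1 / p)) =
      2 ^ (1 / p) * L ^ (δ - 1 / p) * ((2 : ℝ) ^ (1 / p - δ)) ^ n := by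
  refine Real.log_injOn_pos (Set.mem_Ioi.2 (by positivity)) (Set.mem_Ioi.2 (by positivity)) ?_
  rw [Real.log_mul (by positivity) (by positivity), Real.log_mul (by positivity) (by positivity),
    Real.log_mul (by positivity) (by positivity), Real.log_rpow (by positivity),
    Real.log_rpow (by positivity), Real.log_rpow two_pos, Real.log_rpow hL, Real.log_pow,
    Real.log_rpow two_pos, Real.log_div hL.ne' (by positivity),
    Real.log_div hL.ne' (by positivity), Real.log_pow, Real.log_pow]
  push_cast
  ring

theorem ofReal_abs_sub_le_of_tendsto_of_geometric {A : ℕ → ℝ} {x B r : ℝ} (M : ℝ≥0∞)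
    (hlim : Tendsto A atTop (𝓝 x)) (hB : 0 ≤ B) (hr0 : 0 ≤ r) (hr1 : r < 1)
    (hstep : ∀ n, ENNReal.ofReal |A (n + 1) - A n| ≤ ENNReal.ofReal (B * r ^ n) * M) :
    ENNReal.ofReal |x - A 0| ≤ ENNReal.ofReal (B / (1 - r)) * M := by
  have hgeom : ∀ N, ∑ n ∈ Finset.range N, r ^ n ≤ 1 / (1 - r) := fun N ↦ by
    simpa only [← Finset.range_eq_Ico, pow_zero] using
      geom_sum_Ico_le_of_lt_one (m := 0) (n := N) hr0 hr1
  have hpartial : ∀ N, ENNReal.ofReal |A N - A 0| ≤ ENNReal.ofReal (B / (1 - r)) * M := by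
    intro N
    calc ENNReal.ofReal |A N - A 0|
        ≤ ∑ n ∈ Finset.range N, ENNReal.ofReal |A (n + 1) - A n| := by
          rw [← Finset.sum_range_sub, ← ENNReal.ofReal_sum_of_nonneg fun _ _ ↦ abs_nonneg _]
          exact ENNReal.ofReal_le_ofReal (Finset.abs_sum_le_sum_abs _ _)
      _ ≤ ∑ n ∈ Finset.range N, ENNReal.ofReal (B * r ^ n) * M :=
          Finset.sum_le_sum fun n _ ↦ hstep n
      _ = ENNReal.ofReal (B * ∑ n ∈ Finset.range N, r ^ n) * M := by
          rw [← Finset.sum_mul, Finset.mul_sum,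
            ENNReal.ofReal_sum_of_nonneg fun _ _ ↦ by positivity]
      _ ≤ ENNReal.ofReal (B / (1 - r)) * M := by
          rw [← mul_one_div]
          exact mul_le_mul_of_nonneg_right (ENNReal.ofReal_le_ofReal
            (mul_le_mul_of_nonneg_left (hgeom N) hB)) (by positivity)
  exact le_of_tendsto' ((ENNReal.continuous_ofReal.tendsto _).comp
    ((hlim.sub_const _).abs)) hpartial

noncomputable section

def gagliardoKernel (h : ℝ → ℝ) (δ p : ℝ) (x : ℝ × ℝ) : ℝ≥0∞ :=
  ENNReal.ofReal (|h x.2 - h x.1| ^ p / |x.2 - x.1| ^ (1 + δ * p))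

/-- `gagliardoEnergy h δ p s t = |h|_{W^{δ,p};[s,t]} ^ p`. -/
def gagliardoEnergy (h : ℝ → ℝ) (δ p s t : ℝ) : ℝ≥0∞ :=
  ∫⁻ x in Icc s t ×ˢ Icc s t, gagliardoKernel h δ p x

end

theorem gagliardoEnergy_mono {h : ℝ → ℝ} {δ p s t s' t' : ℝ} (hs : s' ≤ s) (ht : t ≤ t') :
    gagliardoEnergy h δ p s t ≤ gagliardoEnergy h δ p s' t' :=
  lintegral_mono_set (prod_mono (Icc_subset_Icc hs ht) (Icc_subset_Icc hs ht))

theorem gagliardoEnergy_add_le {h : ℝ → ℝ} {δ p a b c : ℝ} (hab : a ≤ b) (hbc : b ≤ c) :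
    gagliardoEnergy h δ p a b + gagliardoEnergy h δ p b c ≤ gagliardoEnergy h δ p a c := by
  have hdisj : Disjoint (Ico a b ×ˢ Ico a b) (Icc b c ×ˢ Icc b c) :=
    disjoint_prod.2 <| .inl <|
      (Iio_disjoint_Ici le_rfl).mono Ico_subset_Iio_self Icc_subset_Ici_self
  have hae : (Ico a b ×ˢ Ico a b : Set (ℝ × ℝ)) =ᵐ[volume] Icc a b ×ˢ Icc a b := by
    rw [Measure.volume_eq_prod]
    exact Measure.set_prod_ae_eq Ico_ae_eq_Icc Ico_ae_eq_Icc
  unfold gagliardoEnergy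
  rw [← setLIntegral_congr hae,
    ← lintegral_union (measurableSet_Icc.prod measurableSet_Icc) hdisj]
  exact lintegral_mono_set (union_subset
    (prod_mono (Ico_subset_Icc_self.trans (Icc_subset_Icc le_rfl hbc))
      (Ico_subset_Icc_self.trans (Icc_subset_Icc le_rfl hbc)))
    (prod_mono (Icc_subset_Icc hab le_rfl) (Icc_subset_Icc hab le_rfl)))

theorem ofReal_abs_sub_le_gagliardoKernel_rpow_mul (h : ℝ → ℝ) {δ p u v r : ℝ} (hp : 0 < p)
    (hδ : 0 ≤ δ) (huv : |v - u| ≤ r) :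
    ENNReal.ofReal |h v - h u| ≤
      gagliardoKernel h δ p (u, v) ^ (1 / p) * ENNReal.ofReal (r ^ ((1 + δ * p) / p)) := by
  obtain rfl | hvu := eq_or_ne v u
  · simp
  have hd : 0 < |v - u| := abs_pos.2 (sub_ne_zero.2 hvu)
  have hγ : 0 ≤ (1 + δ * p) / p := by positivity
  have hsplit : |h v - h u| =
      (|h v - h u| ^ p / |v - u| ^ (1 + δ * p)) ^ (1 / p) * |v - u| ^ ((1 + δ * p) / p) := by
    rw [Real.div_rpow (by positivity) (by positivity), ← Real.rpow_mul (abs_nonneg _),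
      ← Real.rpow_mul (abs_nonneg _), mul_one_div_cancel hp.ne', Real.rpow_one,
      mul_one_div, div_mul_cancel₀ _ (Real.rpow_pos_of_pos hd _).ne']
  calc ENNReal.ofReal |h v - h u|
      = ENNReal.ofReal
          ((|h v - h u| ^ p / |v - u| ^ (1 + δ * p)) ^ (1 / p) * |v - u| ^ ((1 + δ * p) / p)) := by
        rw [← hsplit]
    _ ≤ ENNReal.ofReal
          ((|h v - h u| ^ p / |v - u| ^ (1 + δ * p)) ^ (1 / p) * r ^ ((1 + δ * p) / p)) := by
        gcongr
    _ = _ := by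
        rw [ENNReal.ofReal_mul (by positivity),
          ← ENNReal.ofReal_rpow_of_nonneg (by positivity) (by positivity)]
        rfl

theorem aemeasurable_gagliardoKernel {h : ℝ → ℝ} {s t : ℝ} (hcont : ContinuousOn h (Icc s t))
    (δ p : ℝ) : AEMeasurable (gagliardoKernel h δ p) (volume.restrict (Icc s t ×ˢ Icc s t)) := by
  have hdiff : AEMeasurable (fun x : ℝ × ℝ ↦ h x.2 - h x.1)
      (volume.restrict (Icc s t ×ˢ Icc s t)) :=
    ((hcont.comp continuous_snd.continuousOn fun _ hx ↦ hx.2).sub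
      (hcont.comp continuous_fst.continuousOn fun _ hx ↦ hx.1)).aemeasurable
      (measurableSet_Icc.prod measurableSet_Icc)
  exact ENNReal.measurable_ofReal.comp_aemeasurable
    ((hdiff.abs.pow_const p).div (by fun_prop))

theorem ofReal_abs_setIntegral_prod_sub_le {h : ℝ → ℝ} {δ p c d c' d' : ℝ}
    (hcont : ContinuousOn h (Icc c' d')) (hp : 1 ≤ p) (hδ : 0 ≤ δ) (hcd : c ≤ d)
    (hc : c' ≤ c) (hd : d ≤ d') :
    ENNReal.ofReal |∫ z in Icc c d ×ˢ Icc c' d', (h z.2 - h z.1)| ≤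
      gagliardoEnergy h δ p c' d' ^ (1 / p) *
        ENNReal.ofReal (((d - c) * (d' - c')) ^ (1 - 1 / p)) *
        ENNReal.ofReal ((d' - c') ^ ((1 + δ * p) / p)) := by
  have hp0 : 0 < p := one_pos.trans_le hp
  set S : Set (ℝ × ℝ) := Icc c d ×ˢ Icc c' d'
  have hSsub : S ⊆ Icc c' d' ×ˢ Icc c' d' := prod_mono (Icc_subset_Icc hc hd) le_rfl
  have hvolS : volume S = ENNReal.ofReal ((d - c) * (d' - c')) := by
    rw [Measure.volume_eq_prod, Measure.prod_prod, Real.volume_Icc, Real.volume_Icc,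
      ← ENNReal.ofReal_mul (sub_nonneg.2 hcd)]
  have hpointwise : ENNReal.ofReal |∫ z in S, (h z.2 - h z.1)| ≤
      ∫⁻ z in S, gagliardoKernel h δ p z ^ (1 / p) *
        ENNReal.ofReal ((d' - c') ^ ((1 + δ * p) / p)) :=
    calc ENNReal.ofReal |∫ z in S, (h z.2 - h z.1)|
        ≤ ∫⁻ z in S, ENNReal.ofReal |h z.2 - h z.1| := by
          simpa only [Real.enorm_eq_ofReal_abs] using
            enorm_integral_le_lintegral_enorm (μ := volume.restrict S) fun z ↦ h z.2 - h z.1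
      _ ≤ _ := setLIntegral_mono' (measurableSet_Icc.prod measurableSet_Icc) fun z hz ↦
          ofReal_abs_sub_le_gagliardoKernel_rpow_mul h hp0 hδ (abs_sub_le_iff.2
            ⟨by linarith [hz.1.1, hz.2.2], by linarith [hz.1.2, hz.2.1]⟩)
  have hjensen : ∫⁻ z in S, gagliardoKernel h δ p z ^ (1 / p) ≤
      gagliardoEnergy h δ p c' d' ^ (1 / p) *
        ENNReal.ofReal (((d - c) * (d' - c')) ^ (1 - 1 / p)) := by
    refine (lintegral_rpow_one_div_le _
      ((aemeasurable_gagliardoKernel hcont δ p).mono_set hSsub) hp).trans ?_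
    rw [Measure.restrict_apply_univ, hvolS, ENNReal.ofReal_rpow_of_nonneg
      (mul_nonneg (sub_nonneg.2 hcd) (by linarith)) (sub_nonneg.2 ((div_le_one hp0).2 hp))]
    gcongr
    exact lintegral_mono_set hSsub
  rw [lintegral_mul_const' _ _ ENNReal.ofReal_ne_top] at hpointwise
  exact hpointwise.trans (by gcongr)

theorem ofReal_abs_setAverage_sub_setAverage_le {h : ℝ → ℝ} {δ p c d c' d' : ℝ}
    (hcont : ContinuousOn h (Icc c' d')) (hp : 1 ≤ p) (hδ : 0 ≤ δ) (hcd : c < d)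
    (hc : c' ≤ c) (hd : d ≤ d') :
    ENNReal.ofReal |(⨍ x in Icc c' d', h x) - ⨍ x in Icc c d, h x| ≤
      ENNReal.ofReal ((d' - c') ^ δ * (d - c) ^ (-(1 / p))) *
        gagliardoEnergy h δ p c' d' ^ (1 / p) := by
  have hJ : 0 < d - c := sub_pos.2 hcd
  have hI : 0 < d' - c' := by linarith
  have havg : (⨍ x in Icc c' d', h x) - ⨍ x in Icc c d, h x =
      ((d - c) * (d' - c'))⁻¹ * ∫ z in Icc c d ×ˢ Icc c' d', (h z.2 - h z.1) := by
    have hint := hcont.integrableOn_compact (μ := volume) isCompact_Icc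
    rw [setAverage_sub_setAverage_eq_inv_mul_setIntegral_prod (by simpa using hcd)
      (by simpa using sub_pos.1 hI) (by simp) (by simp) (hint.mono_set (Icc_subset_Icc hc hd))
      hint, Real.volume_real_Icc_of_le hcd.le, Real.volume_real_Icc_of_le (by linarith),
      Measure.volume_eq_prod]
  have hcoef : ((d - c) * (d' - c'))⁻¹ * ((d - c) * (d' - c')) ^ (1 - 1 / p) *
      (d' - c') ^ ((1 + δ * p) / p) = (d' - c') ^ δ * (d - c) ^ (-(1 / p)) := by
    rw [← Real.rpow_neg_one, ← Real.rpow_add (by positivity), Real.mul_rpow hJ.le hI.le,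
      mul_assoc, ← Real.rpow_add hI, mul_comm]
    congr 2 <;> field_simp <;> ring
  calc ENNReal.ofReal |(⨍ x in Icc c' d', h x) - ⨍ x in Icc c d, h x|
      = ENNReal.ofReal ((d - c) * (d' - c'))⁻¹ *
          ENNReal.ofReal |∫ z in Icc c d ×ˢ Icc c' d', (h z.2 - h z.1)| := by
        rw [havg, abs_mul, abs_of_pos (by positivity), ENNReal.ofReal_mul (by positivity)]
    _ ≤ ENNReal.ofReal ((d - c) * (d' - c'))⁻¹ *
          (gagliardoEnergy h δ p c' d' ^ (1 / p) *
            ENNReal.ofReal (((d - c) * (d' - c')) ^ (1 - 1 / p)) *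
            ENNReal.ofReal ((d' - c') ^ ((1 + δ * p) / p))) := by
        gcongr
        exact ofReal_abs_setIntegral_prod_sub_le hcont hp hδ hcd.le hc hd
    _ = _ := by
        rw [← hcoef, ENNReal.ofReal_mul (by positivity), ENNReal.ofReal_mul (by positivity)]
        ring

theorem ofReal_abs_sub_setAverage_le {h : ℝ → ℝ} {δ p s t w : ℝ}
    (hcont : ContinuousOn h (Icc s t)) (hp : 1 ≤ p) (hpδ : 1 / p < δ) (hst : s < t)
    {c d : ℕ → ℝ} (hlen : ∀ n, d n - c n = (t - s) / 2 ^ n)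
    (hnest : ∀ n, Icc (c (n + 1)) (d (n + 1)) ⊆ Icc (c n) (d n)) (hc0 : c 0 = s)
    (hw : ∀ n, w ∈ Icc (c n) (d n)) :
    ENNReal.ofReal |h w - ⨍ x in Icc s t, h x| ≤
      ENNReal.ofReal (2 ^ (1 / p) / (1 - 2 ^ (1 / p - δ)) * (t - s) ^ (δ - 1 / p)) *
        gagliardoEnergy h δ p s t ^ (1 / p) := by
  have hL : 0 < t - s := sub_pos.2 hst
  have hδ : 0 ≤ δ := (one_div_pos.2 (one_pos.trans_le hp)).le.trans hpδ.le
  have hcd : ∀ n, c n < d n := fun n ↦ sub_pos.1 (by rw [hlen]; positivity)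
  have hd0 : d 0 = t := by linarith [hlen 0]
  have hsub : ∀ n, Icc (c n) (d n) ⊆ Icc s t := by
    intro n
    induction n with
    | zero => rw [hc0, hd0]
    | succ n ih => exact (hnest n).trans ih
  have hshrink : Tendsto (fun n ↦ d n - c n) atTop (𝓝 0) := by
    simp_rw [hlen]
    exact tendsto_const_nhds.div_atTop (tendsto_pow_atTop_atTop_of_one_lt one_lt_two)
  have hlim : Tendsto (fun n ↦ ⨍ x in Icc (c n) (d n), h x) atTop (𝓝 (h w)) :=
    (hcont.continuousWithinAt (hsub 0 (hw 0))).tendsto_setAverage_Icc hcd hsub hw hshrink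
      fun n ↦ (hcont.mono (hsub n)).integrableOn_compact isCompact_Icc
  have hstep : ∀ n, ENNReal.ofReal |(⨍ x in Icc (c (n + 1)) (d (n + 1)), h x) -
      ⨍ x in Icc (c n) (d n), h x| ≤ ENNReal.ofReal (2 ^ (1 / p) * (t - s) ^ (δ - 1 / p) *
        ((2 : ℝ) ^ (1 / p - δ)) ^ n) * gagliardoEnergy h δ p s t ^ (1 / p) := by
    intro n
    have hnext := hnest n (left_mem_Icc.2 (hcd (n + 1)).le)
    have hnext' := hnest n (right_mem_Icc.2 (hcd (n + 1)).le)
    have h1 := ofReal_abs_setAverage_sub_setAverage_le (hcont.mono (hsub n)) hp hδ (hcd (n + 1))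
      hnext.1 hnext'.2
    rw [abs_sub_comm, hlen, hlen, div_two_pow_rpow_mul_div_two_pow_succ_rpow _ _ _ hL] at h1
    refine h1.trans (mul_le_mul_of_nonneg_left (ENNReal.rpow_le_rpow ?_ (by positivity))
      (by positivity))
    exact gagliardoEnergy_mono (hsub n (left_mem_Icc.2 (hcd n).le)).1
      (hsub n (right_mem_Icc.2 (hcd n).le)).2
  have h := ofReal_abs_sub_le_of_tendsto_of_geometric _ hlim (by positivity) (by positivity)
    (Real.rpow_lt_one_of_one_lt_of_neg one_lt_two (sub_neg.2 hpδ)) hstep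
  rwa [hc0, hd0, mul_div_right_comm] at h

noncomputable def grrConstant (δ p : ℝ) : ℝ := 2 * (2 ^ (1 / p) / (1 - 2 ^ (1 / p - δ)))

theorem grrConstant_pos {δ p : ℝ} (hpδ : 1 / p < δ) : 0 < grrConstant δ p := by
  have : (2 : ℝ) ^ (1 / p - δ) < 1 := Real.rpow_lt_one_of_one_lt_of_neg one_lt_two (by linarith)
  have := sub_pos.2 this
  unfold grrConstant
  positivity

theorem ofReal_abs_sub_le_gagliardoEnergy {h : ℝ → ℝ} {δ p s t : ℝ}
    (hcont : ContinuousOn h (Icc s t)) (hp : 1 ≤ p) (hpδ : 1 / p < δ) (hst : s ≤ t) :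
    ENNReal.ofReal |h t - h s| ≤ ENNReal.ofReal (grrConstant δ p) *
      ENNReal.ofReal (t - s) ^ (δ - 1 / p) * gagliardoEnergy h δ p s t ^ (1 / p) := by
  obtain rfl | hst := hst.eq_or_lt
  · simp
  have hL : 0 < t - s := sub_pos.2 hst
  have hpos : ∀ n : ℕ, 0 < (t - s) / 2 ^ n := fun n ↦ by positivity
  have hhalf : ∀ n : ℕ, (t - s) / 2 ^ (n + 1) ≤ (t - s) / 2 ^ n := fun n ↦ by
    rw [pow_succ, ← div_div]
    exact div_le_self (hpos n).le one_le_two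
  have hright := ofReal_abs_sub_setAverage_le hcont hp hpδ hst (w := t)
    (c := fun n ↦ t - (t - s) / 2 ^ n) (d := fun _ ↦ t) (fun n ↦ by ring)
    (fun n ↦ Icc_subset_Icc (by linarith [hhalf n]) le_rfl) (by simp)
    (fun n ↦ ⟨by linarith [hpos n], le_rfl⟩)
  have hleft := ofReal_abs_sub_setAverage_le hcont hp hpδ hst (w := s)
    (c := fun _ ↦ s) (d := fun n ↦ s + (t - s) / 2 ^ n) (fun n ↦ by ring)
    (fun n ↦ Icc_subset_Icc le_rfl (by linarith [hhalf n])) rfl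
    (fun n ↦ ⟨le_rfl, by linarith [hpos n]⟩)
  calc ENNReal.ofReal |h t - h s|
      ≤ ENNReal.ofReal |h t - ⨍ x in Icc s t, h x| +
          ENNReal.ofReal |h s - ⨍ x in Icc s t, h x| := by
        rw [← ENNReal.ofReal_add (abs_nonneg _) (abs_nonneg _)]
        refine ENNReal.ofReal_le_ofReal ((abs_sub_le _ (⨍ x in Icc s t, h x) _).trans_eq ?_)
        rw [abs_sub_comm (⨍ x in Icc s t, h x)]
    _ ≤ _ := add_le_add hright hleft
    _ = _ := by
        rw [← two_mul, ENNReal.ofReal_mul' (by positivity), grrConstant,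
          ENNReal.ofReal_mul zero_le_two, ENNReal.ofReal_ofNat,
          ENNReal.ofReal_rpow_of_nonneg hL.le (sub_nonneg.2 hpδ.le)]
        ring

theorem ofReal_rpow_sum_abs_sub_rpow_le {h : ℝ → ℝ} {δ p q a b : ℝ} (hp : 1 ≤ p)
    (hpδ : 1 / p < δ) (hq : δ * q = 1) (hcont : ContinuousOn h (Icc a b)) {n : ℕ}
    {t : Fin (n + 1) → ℝ} (ht : Monotone t) (ht0 : t 0 = a) (htn : t (Fin.last n) = b) :
    ENNReal.ofReal ((∑ i : Fin n, |h (t i.succ) - h (t i.castSucc)| ^ q) ^ (1 / q)) ≤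
      ENNReal.ofReal (grrConstant δ p * (b - a) ^ (δ - 1 / p)) *
        gagliardoEnergy h δ p a b ^ (1 / p) := by
  have hq0 : 0 < q := pos_of_mul_pos_right (hq ▸ one_pos) (hpδ.trans' (by positivity)).le
  have hab : a ≤ b := ht0 ▸ htn ▸ ht (Fin.zero_le _)
  have hincr : ∀ i ∈ (Finset.univ : Finset (Fin n)),
      ENNReal.ofReal |h (t i.succ) - h (t i.castSucc)| ≤ ENNReal.ofReal (grrConstant δ p) *
        ENNReal.ofReal (t i.succ - t i.castSucc) ^ (δ - 1 / p) *
        gagliardoEnergy h δ p (t i.castSucc) (t i.succ) ^ (1 / p) := fun i _ ↦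
    ofReal_abs_sub_le_gagliardoEnergy (hcont.mono (Icc_subset_Icc
      (ht0 ▸ ht (Fin.zero_le _)) (htn ▸ ht (Fin.le_last _)))) hp hpδ (ht Fin.castSucc_lt_succ.le)
  have hlength : ∑ i : Fin n, ENNReal.ofReal (t i.succ - t i.castSucc) ≤
      ENNReal.ofReal (b - a) := by
    rw [← ht0, ← htn]
    refine Monotone.sum_le_of_add_le (fun x y ↦ ENNReal.ofReal (y - x))
      (fun x y z hxy hyz ↦ ?_) ht
    rw [← ENNReal.ofReal_add (sub_nonneg.2 hxy) (sub_nonneg.2 hyz), sub_add_sub_cancel']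
  have henergy : ∑ i : Fin n, gagliardoEnergy h δ p (t i.castSucc) (t i.succ) ≤
      gagliardoEnergy h δ p a b := by
    rw [← ht0, ← htn]
    exact Monotone.sum_le_of_add_le _ (fun _ _ _ ↦ gagliardoEnergy_add_le) ht
  rw [← ENNReal.ofReal_rpow_of_nonneg (by positivity) (by positivity),
    ENNReal.ofReal_sum_of_nonneg fun _ _ ↦ by positivity, ENNReal.ofReal_mul
    (grrConstant_pos hpδ).le, ← ENNReal.ofReal_rpow_of_nonneg (sub_nonneg.2 hab) (by linarith)]
  simp_rw [← ENNReal.ofReal_rpow_of_nonneg (abs_nonneg _) hq0.le]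
  calc _ ≤ ENNReal.ofReal (grrConstant δ p) *
          (∑ i : Fin n, ENNReal.ofReal (t i.succ - t i.castSucc)) ^ (δ - 1 / p) *
          (∑ i : Fin n, gagliardoEnergy h δ p (t i.castSucc) (t i.succ)) ^ (1 / p) :=
        ENNReal.rpow_sum_rpow_le_of_le_mul _ _ _ _ _ hq0 (by linarith) (by positivity)
          (by rw [sub_add_cancel, hq]) hincr
    _ ≤ _ := by gcongr

theorem stmt_5_general (δ p α q : ℝ) (hp : 1 ≤ p)
    (hα : α = δ - 1/p) (hα0 : 0 < α) (hq : q = 1/δ) :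
    ∃ C : ℝ, 0 < C ∧ ∀ h : ℝ → ℝ, ContinuousOn h (Set.Icc 0 1) →
      ∀ a b, 0 ≤ a → a < b → b ≤ 1 →
      ∀ n : ℕ, ∀ t : Fin (n + 1) → ℝ, Monotone t →
        t 0 = a → t (Fin.last n) = b → (∀ i, t i ∈ Set.Icc a b) →
        ENNReal.ofReal ((∑ i : Fin n, |h (t i.succ) - h (t i.castSucc)| ^ q) ^ (1/q)) ≤
          ENNReal.ofReal (C * (b - a) ^ α) *
          (∫⁻ x in Set.Icc a b ×ˢ Set.Icc a b,
              ENNReal.ofReal (|h x.2 - h x.1| ^ p / |x.2 - x.1| ^ (1 + δ * p))) ^ (1/p) := by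
  subst hα hq
  have hpδ : 1 / p < δ := sub_pos.1 hα0
  refine ⟨grrConstant δ p, grrConstant_pos hpδ, ?_⟩
  intro h hcont a b ha _ hb n t ht ht0 htn _
  exact ofReal_rpow_sum_abs_sub_rpow_le hp hpδ (mul_one_div_cancel (hpδ.trans' (by positivity)).ne')
    (hcont.mono (Icc_subset_Icc ha hb)) ht ht0 htn

/-- `q`-variation embedding: `|h|_{q-var;[a,b]} ≤ C (b-a)^α |h|_{W^{δ,p};[a,b]}`,
with `α = δ - 1/p > 0`, `q = 1/δ`; the `q`-variation is the supremum over partitions. -/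
theorem stmt_5 (δ p α q : ℝ) (hδ : 0 < δ) (hδ1 : δ < 1) (hp : 1 ≤ p)
    (hα : α = δ - 1/p) (hα0 : 0 < α) (hq : q = 1/δ) :
    ∃ C : ℝ, 0 < C ∧ ∀ h : ℝ → ℝ, ContinuousOn h (Set.Icc 0 1) →
      ∀ a b, 0 ≤ a → a < b → b ≤ 1 →
      ∀ n : ℕ, ∀ t : Fin (n + 1) → ℝ, Monotone t →
        t 0 = a → t (Fin.last n) = b → (∀ i, t i ∈ Set.Icc a b) →
        ENNReal.ofReal ((∑ i : Fin n, |h (t i.succ) - h (t i.castSucc)| ^ q) ^ (1/q)) ≤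
          ENNReal.ofReal (C * (b - a) ^ α) *
          (∫⁻ x in Set.Icc a b ×ˢ Set.Icc a b,
              ENNReal.ofReal (|h x.2 - h x.1| ^ p / |x.2 - x.1| ^ (1 + δ * p))) ^ (1/p) :=
  stmt_5_general δ p α q hp hα hα0 hq
end

section
/- (Garsia–Rodemich–Rumsey estimate, special case) Let p > 1, 0 < δ < 1 with δ - 1/p > 0. There exists C > 0 such that for every continuous f : [0,1] → ℝ and all 0 ≤ s < t ≤ 1, |f(t) - f(s)| ≤ C (∫∫_{[s,t]^2} |f(v) - f(u)|^p / |v-u|^{1+δp} du dv)^{1/p} · (t-s)^{δ - 1/p}. -/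
/-!
Compare the value of `f` at an endpoint of `[s, t]` with its mean over `[s, t]` along the nested
intervals of length `(t - s) / 2 ^ n` that contain this endpoint. By Jensen's inequality, the means
of `f` over two intervals `J ⊆ I` differ by at most the `L^p` mean of `f x - f y` over `J × I`; as
`|x - y| ≤ |I|` there, for `|J| = |I| / 2` this is at most `2 ^ (1/p) |I| ^ (δ - 1/p)` times the
`p`-th root of the Gagliardo integral. Since `δ - 1/p > 0` these bounds form a geometric series,
and by continuity the means converge to the value at the endpoint.
-/

open MeasureTheory Filter Topology Set
open scoped ENNReal

section MeanOscillation

variable {α : Type*} [MeasurableSpace α] {μ ν : Measure α} {f : α → ℝ}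

theorem integral_sub_integral_eq_integral_prod [IsProbabilityMeasure μ] [IsProbabilityMeasure ν]
    (hμ : Integrable f μ) (hν : Integrable f ν) :
    ∫ x, f x ∂μ - ∫ x, f x ∂ν = ∫ q, (f q.1 - f q.2) ∂(μ.prod ν) := by
  rw [integral_sub (hμ.comp_fst ν) (hν.comp_snd μ), integral_fun_fst, integral_fun_snd]
  simp

theorem ofReal_abs_integral_sub_integral_le [IsProbabilityMeasure μ] [IsProbabilityMeasure ν]
    (hμ : Integrable f μ) (hν : Integrable f ν) {p : ℝ} (hp : 1 ≤ p) :
    ENNReal.ofReal |∫ x, f x ∂μ - ∫ x, f x ∂ν| ≤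
      (∫⁻ q, ‖f q.1 - f q.2‖ₑ ^ p ∂(μ.prod ν)) ^ (1 / p) := by
  have hg : AEStronglyMeasurable (fun q : α × α ↦ f q.1 - f q.2) (μ.prod ν) :=
    ((hμ.comp_fst ν).sub (hν.comp_snd μ)).aestronglyMeasurable
  rw [← Real.enorm_eq_ofReal_abs, integral_sub_integral_eq_integral_prod hμ hν]
  calc ‖∫ q, (f q.1 - f q.2) ∂(μ.prod ν)‖ₑ
      ≤ eLpNorm (fun q : α × α ↦ f q.1 - f q.2) 1 (μ.prod ν) := by
        rw [eLpNorm_one_eq_lintegral_enorm]; exact enorm_integral_le_lintegral_enorm _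
    _ ≤ eLpNorm (fun q : α × α ↦ f q.1 - f q.2) (ENNReal.ofReal p) (μ.prod ν) :=
        eLpNorm_le_eLpNorm_of_exponent_le (by simpa using hp) hg
    _ = _ := by
        rw [eLpNorm_eq_lintegral_rpow_enorm_toReal (ENNReal.ofReal_pos.2 (by linarith)).ne'
          ENNReal.ofReal_ne_top, ENNReal.toReal_ofReal (by linarith)]

theorem ofReal_abs_average_sub_average_le [IsFiniteMeasure μ] [NeZero μ]
    [IsFiniteMeasure ν] [NeZero ν] (hμ : Integrable f μ) (hν : Integrable f ν) {p : ℝ}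
    (hp : 1 ≤ p) :
    ENNReal.ofReal |⨍ x, f x ∂μ - ⨍ x, f x ∂ν| ≤
      (⨍⁻ q, ‖f q.1 - f q.2‖ₑ ^ p ∂(μ.prod ν)) ^ (1 / p) := by
  have hnorm : ((μ.prod ν) univ)⁻¹ • μ.prod ν = ((μ univ)⁻¹ • μ).prod ((ν univ)⁻¹ • ν) := by
    rw [Measure.prod_smul_left, Measure.prod_smul_right, smul_smul, ← univ_prod_univ,
      Measure.prod_prod, ENNReal.mul_inv (by simp) (by simp), mul_comm]
  rw [average_eq', average_eq', laverage_eq', hnorm]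
  exact ofReal_abs_integral_sub_integral_le hμ.to_average hν.to_average hp

end MeanOscillation

section Shrinking

variable {α E ι : Type*} [MeasurableSpace α] [NormedAddCommGroup E] [NormedSpace ℝ E]
  [CompleteSpace E] {μ : Measure α} {f : α → E}

theorem norm_setAverage_sub_le {s : Set α} {c : E} {C : ℝ} (hs₀ : μ s ≠ 0) (hs : μ s ≠ ∞)
    (hf : IntegrableOn f s μ) (hC : ∀ y ∈ s, ‖f y - c‖ ≤ C) :
    ‖⨍ y in s, f y ∂μ - c‖ ≤ C := by
  have hμs : 0 < μ.real s := ENNReal.toReal_pos hs₀ hs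
  have hsub : ⨍ y in s, f y ∂μ - c = (μ.real s)⁻¹ • ∫ y in s, (f y - c) ∂μ := by
    rw [setAverage_eq, integral_sub hf (integrableOn_const hs), setIntegral_const, smul_sub,
      inv_smul_smul₀ hμs.ne']
  rw [hsub, norm_smul, norm_inv, Real.norm_of_nonneg hμs.le, inv_mul_le_iff₀ hμs, mul_comm]
  exact norm_setIntegral_le_of_norm_le_const hs.lt_top hC

theorem tendsto_setAverage_of_continuousWithinAt [PseudoMetricSpace α] {S : Set α} {x : α}
    {l : Filter ι} {I : ι → Set α} (hf : ContinuousWithinAt f S x)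
    (hfI : ∀ i, IntegrableOn f (I i) μ) (hIS : ∀ i, I i ⊆ S) (hI₀ : ∀ i, μ (I i) ≠ 0)
    (hI : ∀ i, μ (I i) ≠ ∞) (hshrink : ∀ ε > 0, ∀ᶠ i in l, I i ⊆ Metric.ball x ε) :
    Tendsto (fun i ↦ ⨍ y in I i, f y ∂μ) l (𝓝 (f x)) := by
  rw [Metric.tendsto_nhds]
  intro ε hε
  obtain ⟨η, hη, hfη⟩ := Metric.continuousWithinAt_iff.1 hf (ε / 2) (half_pos hε)
  filter_upwards [hshrink η hη] with i hi
  rw [dist_eq_norm]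
  refine (norm_setAverage_sub_le (hI₀ i) (hI i) (hfI i) fun y hy ↦ ?_).trans_lt (half_lt_self hε)
  rw [← dist_eq_norm]
  exact (hfη (hIS i hy) (hi hy)).le

end Shrinking

/-- The `p`-th power of the Gagliardo `W^{δ,p}(S)` seminorm of `f`. -/
noncomputable def gagliardoIntegral (p δ : ℝ) (f : ℝ → ℝ) (S : Set ℝ) : ℝ≥0∞ :=
  ∫⁻ x in S ×ˢ S, ENNReal.ofReal (|f x.2 - f x.1| ^ p / |x.2 - x.1| ^ (1 + δ * p))

theorem gagliardoIntegral_mono {p δ : ℝ} {f : ℝ → ℝ} {S T : Set ℝ} (h : S ⊆ T) :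
    gagliardoIntegral p δ f S ≤ gagliardoIntegral p δ f T :=
  lintegral_mono_set (prod_mono h h)

theorem enorm_sub_rpow_le_of_abs_sub_le {p β ℓ x y : ℝ} (f : ℝ → ℝ) (hp : 0 < p) (hβ : 0 ≤ β)
    (hxy : |y - x| ≤ ℓ) :
    ‖f x - f y‖ₑ ^ p ≤
      ENNReal.ofReal (ℓ ^ β) * ENNReal.ofReal (|f y - f x| ^ p / |y - x| ^ β) := by
  have hℓ : 0 ≤ ℓ := (abs_nonneg _).trans hxy
  rw [Real.enorm_eq_ofReal_abs, ENNReal.ofReal_rpow_of_nonneg (abs_nonneg _) hp.le,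
    ← ENNReal.ofReal_mul (Real.rpow_nonneg hℓ _), abs_sub_comm]
  refine ENNReal.ofReal_le_ofReal ?_
  rcases eq_or_ne x y with rfl | hne
  · rw [sub_self, abs_zero, Real.zero_rpow hp.ne']
    positivity
  · have hpos : 0 < |y - x| ^ β := Real.rpow_pos_of_pos (abs_pos.2 (sub_ne_zero.2 hne.symm)) _
    calc |f y - f x| ^ p = |y - x| ^ β * (|f y - f x| ^ p / |y - x| ^ β) := by
          rw [mul_div_cancel₀ _ hpos.ne']
      _ ≤ ℓ ^ β * (|f y - f x| ^ p / |y - x| ^ β) := by gcongr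

theorem ofReal_abs_setAverage_sub_setAverage_le_s6 {p δ a b : ℝ} {f : ℝ → ℝ} {J : Set ℝ}
    (hp : 1 ≤ p) (hδ : 0 ≤ δ) (hab : a < b) (hJ : MeasurableSet J) (hJI : J ⊆ Icc a b)
    (hJ₀ : volume J ≠ 0) (hf : IntegrableOn f (Icc a b)) :
    ENNReal.ofReal |(⨍ x in J, f x) - ⨍ x in Icc a b, f x| ≤
      ((volume J * ENNReal.ofReal (b - a))⁻¹ * ENNReal.ofReal ((b - a) ^ (1 + δ * p)) *
        gagliardoIntegral p δ f (Icc a b)) ^ (1 / p) := by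
  have : IsFiniteMeasure (volume.restrict J) :=
    isFiniteMeasure_restrict.2 (measure_mono hJI |>.trans_lt measure_Icc_lt_top).ne
  have : NeZero (volume.restrict J) := ⟨by rwa [Ne, Measure.restrict_eq_zero]⟩
  have : NeZero (volume.restrict (Icc a b)) := ⟨by simp [Measure.restrict_eq_zero, hab]⟩
  refine (ofReal_abs_average_sub_average_le (hf.mono_set hJI) hf hp).trans ?_
  gcongr
  rw [laverage_eq, Measure.prod_restrict, ← Measure.volume_eq_prod, Measure.restrict_apply_univ,
    Measure.volume_eq_prod, Measure.prod_prod, Real.volume_Icc, div_eq_mul_inv, mul_comm,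
    mul_assoc]
  gcongr
  calc ∫⁻ q in J ×ˢ Icc a b, ‖f q.1 - f q.2‖ₑ ^ p
      ≤ ∫⁻ q in J ×ˢ Icc a b, ENNReal.ofReal ((b - a) ^ (1 + δ * p)) *
          ENNReal.ofReal (|f q.2 - f q.1| ^ p / |q.2 - q.1| ^ (1 + δ * p)) := by
        refine setLIntegral_mono' (hJ.prod measurableSet_Icc) fun q hq ↦ ?_
        have hq₁ := hJI hq.1
        have hq₂ := hq.2
        refine enorm_sub_rpow_le_of_abs_sub_le f (by linarith) (by positivity) ?_
        rw [abs_sub_le_iff]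
        constructor <;> linarith [hq₁.1, hq₁.2, hq₂.1, hq₂.2]
    _ ≤ ENNReal.ofReal ((b - a) ^ (1 + δ * p)) * gagliardoIntegral p δ f (Icc a b) := by
        rw [lintegral_const_mul' _ _ ENNReal.ofReal_ne_top]
        exact mul_le_mul_right (lintegral_mono_set (prod_mono hJI subset_rfl)) _

theorem abs_setAverage_sub_setAverage_le_of_half {p δ a c ℓ : ℝ} {f : ℝ → ℝ} (hp : 1 ≤ p)
    (hδ : 0 ≤ δ) (hℓ : 0 < ℓ) (hca : Icc c (c + ℓ / 2) ⊆ Icc a (a + ℓ))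
    (hf : IntegrableOn f (Icc a (a + ℓ))) (hE : gagliardoIntegral p δ f (Icc a (a + ℓ)) ≠ ∞) :
    |(⨍ x in Icc c (c + ℓ / 2), f x) - ⨍ x in Icc a (a + ℓ), f x| ≤
      2 ^ (1 / p) * ℓ ^ (δ - 1 / p) *
        (gagliardoIntegral p δ f (Icc a (a + ℓ))).toReal ^ (1 / p) := by
  set K := (gagliardoIntegral p δ f (Icc a (a + ℓ))).toReal
  have hK : 0 ≤ K := ENNReal.toReal_nonneg
  have h := ofReal_abs_setAverage_sub_setAverage_le_s6 hp hδ (by linarith : a < a + ℓ)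
    measurableSet_Icc hca (by simp [Real.volume_Icc, hℓ]) hf
  rw [Real.volume_Icc, add_sub_cancel_left, add_sub_cancel_left, ← ENNReal.ofReal_toReal hE,
    ← ENNReal.ofReal_mul (by positivity), ← ENNReal.ofReal_inv_of_pos (by positivity),
    ← ENNReal.ofReal_mul (by positivity), ← ENNReal.ofReal_mul (by positivity),
    ENNReal.ofReal_rpow_of_nonneg (by positivity) (by positivity),
    ENNReal.ofReal_le_ofReal_iff (by positivity)] at h
  refine h.trans_eq ?_
  have hp₀ : p ≠ 0 := by positivity
  have hscale : (ℓ / 2 * ℓ)⁻¹ * ℓ ^ (1 + δ * p) = 2 * ℓ ^ ((δ - 1 / p) * p) := by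
    rw [show (δ - 1 / p) * p = 1 + δ * p - 2 by field_simp; ring, Real.rpow_sub hℓ,
      Real.rpow_two]
    field_simp
  rw [hscale, Real.mul_rpow (by positivity) hK, Real.mul_rpow (by positivity) (by positivity),
    ← Real.rpow_mul hℓ.le, mul_assoc (δ - 1 / p), mul_one_div_cancel hp₀, mul_one, mul_assoc]

theorem abs_setAverage_sub_le_of_dyadic_chain {p δ s t x : ℝ} {f : ℝ → ℝ} (hp : 1 ≤ p)
    (hα : 0 < δ - 1 / p) (hst : s < t) (hf : ContinuousOn f (Icc s t))
    (hE : gagliardoIntegral p δ f (Icc s t) ≠ ∞) {a : ℕ → ℝ} (ha₀ : a 0 = s)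
    (hnest : ∀ n, Icc (a (n + 1)) (a (n + 1) + (t - s) / 2 ^ (n + 1)) ⊆
      Icc (a n) (a n + (t - s) / 2 ^ n))
    (hx : ∀ n, x ∈ Icc (a n) (a n + (t - s) / 2 ^ n)) :
    |(⨍ y in Icc s t, f y) - f x| ≤
      2 ^ (1 / p) * (gagliardoIntegral p δ f (Icc s t)).toReal ^ (1 / p) *
        (t - s) ^ (δ - 1 / p) / (1 - 2 ^ (-(δ - 1 / p))) := by
  set α := δ - 1 / p
  set K := (gagliardoIntegral p δ f (Icc s t)).toReal
  set I : ℕ → Set ℝ := fun n ↦ Icc (a n) (a n + (t - s) / 2 ^ n)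
  have hI₀ : I 0 = Icc s t := by simp [I, ha₀]
  have hIst : ∀ n, I n ⊆ Icc s t := fun n ↦ hI₀ ▸ antitone_nat_of_succ_le hnest (Nat.zero_le n)
  have hlen : ∀ n, 0 < (t - s) / 2 ^ n := fun n ↦ by have := sub_pos.2 hst; positivity
  have hδ : 0 ≤ δ := by linarith [one_div_pos.2 (zero_lt_one.trans_le hp)]
  have hstep : ∀ n, dist (⨍ y in I n, f y) (⨍ y in I (n + 1), f y) ≤
      2 ^ (1 / p) * K ^ (1 / p) * (t - s) ^ α * (2 ^ (-α)) ^ n := by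
    intro n
    have hhalf : (t - s) / 2 ^ (n + 1) = (t - s) / 2 ^ n / 2 := by rw [pow_succ, div_div]
    have h := abs_setAverage_sub_setAverage_le_of_half hp hδ (hlen n) (hhalf ▸ hnest n)
      (hf.mono (hIst n)).integrableOn_Icc
      (ne_top_of_le_ne_top hE (gagliardoIntegral_mono (hIst n)))
    rw [dist_comm, Real.dist_eq]
    simp only [I, hhalf]
    have hK : (gagliardoIntegral p δ f (I n)).toReal ≤ K :=
      ENNReal.toReal_mono hE (gagliardoIntegral_mono (hIst n))
    have hscale : ((t - s) / 2 ^ n) ^ α = (t - s) ^ α * (2 ^ (-α)) ^ n := by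
      rw [Real.div_rpow (sub_pos.2 hst).le (by positivity), ← Real.rpow_natCast,
        ← Real.rpow_natCast, ← Real.rpow_mul zero_le_two, ← Real.rpow_mul zero_le_two,
        div_eq_mul_inv, ← Real.rpow_neg zero_le_two, neg_mul, mul_comm α]
    calc _ ≤ _ := h
      _ ≤ 2 ^ (1 / p) * ((t - s) / 2 ^ n) ^ α * K ^ (1 / p) := by gcongr
      _ = _ := by rw [hscale]; ring
  have hshrink : ∀ ε > 0, ∀ᶠ n in atTop, I n ⊆ Metric.ball x ε := by
    intro ε hε
    have hlen₀ : Tendsto (fun n : ℕ ↦ (t - s) / 2 ^ n) atTop (𝓝 0) :=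
      tendsto_const_nhds.div_atTop (tendsto_pow_atTop_atTop_of_one_lt one_lt_two)
    filter_upwards [hlen₀.eventually (gt_mem_nhds hε)] with n hn y hy
    obtain ⟨hxa, hxb⟩ := hx n
    rw [Metric.mem_ball, Real.dist_eq, abs_lt]
    constructor <;> linarith [hy.1, hy.2]
  have hr : (2 : ℝ) ^ (-α) < 1 :=
    Real.rpow_lt_one_of_one_lt_of_neg one_lt_two (neg_neg_of_pos hα)
  have hlim := tendsto_setAverage_of_continuousWithinAt (μ := volume) (hf x (hIst 0 (hx 0)))
    (fun n ↦ (hf.mono (hIst n)).integrableOn_Icc) hIst (fun n ↦ by simp [hlen n])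
    (fun n ↦ by simp) hshrink
  have := dist_le_of_le_geometric_of_tendsto₀ _ _ hr hstep hlim
  rwa [Real.dist_eq, hI₀] at this

theorem abs_sub_le_of_gagliardoIntegral_ne_top {p δ s t : ℝ} {f : ℝ → ℝ} (hp : 1 ≤ p)
    (hα : 0 < δ - 1 / p) (hst : s < t) (hf : ContinuousOn f (Icc s t))
    (hE : gagliardoIntegral p δ f (Icc s t) ≠ ∞) :
    |f t - f s| ≤ 2 * 2 ^ (1 / p) / (1 - 2 ^ (-(δ - 1 / p))) *
      (gagliardoIntegral p δ f (Icc s t)).toReal ^ (1 / p) * (t - s) ^ (δ - 1 / p) := by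
  have hlen : ∀ n : ℕ, 0 < (t - s) / 2 ^ n := fun n ↦ by have := sub_pos.2 hst; positivity
  have hhalf : ∀ n : ℕ, (t - s) / 2 ^ (n + 1) ≤ (t - s) / 2 ^ n := fun n ↦ by
    rw [pow_succ, ← div_div]
    linarith [hlen n]
  have hleft := abs_setAverage_sub_le_of_dyadic_chain hp hα hst hf hE (x := s) (a := fun _ ↦ s)
    rfl (fun n ↦ Icc_subset_Icc le_rfl (by linarith [hhalf n]))
    (fun n ↦ ⟨le_rfl, by linarith [hlen n]⟩)
  have hright := abs_setAverage_sub_le_of_dyadic_chain hp hα hst hf hE (x := t)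
    (a := fun n ↦ t - (t - s) / 2 ^ n) (by simp)
    (fun n ↦ by
      simp only [sub_add_cancel]
      exact Icc_subset_Icc (by linarith [hhalf n]) le_rfl)
    (fun n ↦ ⟨by linarith [hlen n], by simp⟩)
  calc |f t - f s| ≤ |(⨍ y in Icc s t, f y) - f t| + |(⨍ y in Icc s t, f y) - f s| :=
        abs_sub_comm (f t) (⨍ y in Icc s t, f y) ▸ abs_sub_le _ _ _
    _ ≤ _ := add_le_add hright hleft
    _ = _ := by ring

theorem stmt_6_general (p δ : ℝ) (hp : 1 < p)
    (hα : 0 < δ - 1/p) :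
    ∃ C : ℝ, 0 < C ∧ ∀ f : ℝ → ℝ, ContinuousOn f (Set.Icc 0 1) →
      ∀ s t, 0 ≤ s → s < t → t ≤ 1 →
        ENNReal.ofReal |f t - f s| ≤
          ENNReal.ofReal C *
          (∫⁻ x in Set.Icc s t ×ˢ Set.Icc s t,
              ENNReal.ofReal (|f x.2 - f x.1| ^ p / |x.2 - x.1| ^ (1 + δ * p))) ^ (1/p) *
          ENNReal.ofReal ((t - s) ^ (δ - 1/p)) := by
  have hr : (2 : ℝ) ^ (-(δ - 1 / p)) < 1 :=
    Real.rpow_lt_one_of_one_lt_of_neg one_lt_two (neg_neg_of_pos hα)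
  set C : ℝ := 2 * 2 ^ (1 / p) / (1 - 2 ^ (-(δ - 1 / p)))
  have hC : 0 < C := div_pos (by positivity) (sub_pos.2 hr)
  refine ⟨C, hC, fun f hf s t hs hst ht ↦ ?_⟩
  change _ ≤ _ * gagliardoIntegral p δ f (Icc s t) ^ (1 / p) * _
  rcases eq_or_ne (gagliardoIntegral p δ f (Icc s t)) ∞ with hE | hE
  · rw [hE, ENNReal.top_rpow_of_pos (by positivity), ENNReal.mul_top (by simpa using hC),
      ENNReal.top_mul (by simpa using Real.rpow_pos_of_pos (sub_pos.2 hst) _)]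
    exact le_top
  calc ENNReal.ofReal |f t - f s|
      ≤ ENNReal.ofReal
          (C * (gagliardoIntegral p δ f (Icc s t)).toReal ^ (1 / p) * (t - s) ^ (δ - 1 / p)) :=
        ENNReal.ofReal_le_ofReal <| abs_sub_le_of_gagliardoIntegral_ne_top hp.le hα hst
          (hf.mono (Icc_subset_Icc hs ht)) hE
    _ = _ := by
        rw [ENNReal.ofReal_mul (by positivity), ENNReal.ofReal_mul hC.le,
          ← ENNReal.ofReal_rpow_of_nonneg ENNReal.toReal_nonneg (by positivity),
          ENNReal.ofReal_toReal hE]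

/-- Garsia–Rodemich–Rumsey estimate, special case `Ψ(x) = x^p`, `p(u) = u^{1/p+δ}`. -/
theorem stmt_6 (p δ : ℝ) (hp : 1 < p) (hδ : 0 < δ) (hδ1 : δ < 1)
    (hα : 0 < δ - 1/p) :
    ∃ C : ℝ, 0 < C ∧ ∀ f : ℝ → ℝ, ContinuousOn f (Set.Icc 0 1) →
      ∀ s t, 0 ≤ s → s < t → t ≤ 1 →
        ENNReal.ofReal |f t - f s| ≤
          ENNReal.ofReal C *
          (∫⁻ x in Set.Icc s t ×ˢ Set.Icc s t,
              ENNReal.ofReal (|f x.2 - f x.1| ^ p / |x.2 - x.1| ^ (1 + δ * p))) ^ (1/p) *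
          ENNReal.ofReal ((t - s) ^ (δ - 1/p)) :=
  stmt_6_general p δ hp hα
end

section
/- Let H ∈ (0,1/2) and K_1(t,s) = (t-s)^{H-1/2} for 0 ≤ s < t ≤ 1 (and 0 otherwise). Then sup_{u ∈ [0,1]} ∫_0^{1-t} |K_1(s+t, u) - K_1(s, u)| ds = O(t^{H+1/2}) and sup_{s ∈ [0,1-t]} ∫_0^1 |K_1(s+t, u) - K_1(s, u)| du = O(t^{H+1/2}) as t → 0+. -/
/-!
Write `k(x) = x₊^α` with `α = H - 1/2 ∈ (-1, 0)`, so that `K₁(t, s) = k(t - s)`. After the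
substitution `x = s - u` both integrals are integrals of `|k(x + t) - k(x)|` over an interval, and
since the integrand is nonnegative they are at most its integral over `ℝ`. There it equals
`(x + t)^α` on `(-t, 0]` and `x^α - (x + t)^α ≥ 0` on `(0, ∞)` (as `α ≤ 0`); the first piece
contributes `t^(α+1)/(α+1)` and the second telescopes to at most the same, giving the bound
`2 t^(H+1/2) / (H + 1/2)`.
-/

open MeasureTheory intervalIntegral

noncomputable def truncPow (α x : ℝ) : ℝ := Set.indicator (Set.Ioi 0) (fun x => x ^ α) x

section truncPow

variable {α : ℝ}

lemma truncPow_of_pos {x : ℝ} (hx : 0 < x) : truncPow α x = x ^ α :=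
  Set.indicator_of_mem hx _

lemma truncPow_of_nonpos {x : ℝ} (hx : x ≤ 0) : truncPow α x = 0 :=
  Set.indicator_of_notMem (not_lt.2 hx) _

lemma truncPow_nonneg (x : ℝ) : 0 ≤ truncPow α x :=
  Set.indicator_nonneg (fun y (hy : 0 < y) => Real.rpow_nonneg hy.le α) x

lemma truncPow_intervalIntegrable (hα : -1 < α) (a b : ℝ) :
    IntervalIntegrable (truncPow α) volume a b :=
  intervalIntegrable_iff.2 <|
    (intervalIntegrable_iff.1 (intervalIntegrable_rpow' hα)).indicator measurableSet_Ioi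

lemma truncPow_integral_of_nonneg (hα : -1 < α) {a b : ℝ} (ha : 0 ≤ a) (hb : 0 ≤ b) :
    ∫ x in a..b, truncPow α x = (b ^ (α + 1) - a ^ (α + 1)) / (α + 1) := by
  rw [← integral_rpow (Or.inl hα)]
  refine integral_congr_ae (Filter.Eventually.of_forall fun x hx => truncPow_of_pos ?_)
  exact (le_min ha hb).trans_lt hx.1

lemma truncPow_intervalIntegrable_abs_increment (hα : -1 < α) (t a b : ℝ) :
    IntervalIntegrable (fun x => |truncPow α (x + t) - truncPow α x|) volume a b := by
  have := (truncPow_intervalIntegrable hα (a + t) (b + t)).comp_add_right t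
  simp only [add_sub_cancel_right] at this
  exact (this.sub (truncPow_intervalIntegrable hα a b)).abs

lemma truncPow_integral_abs_increment (hα : -1 < α) (hα0 : α ≤ 0) {t c d : ℝ} (ht : 0 ≤ t)
    (hc : c ≤ -t) (hd : 0 ≤ d) :
    ∫ x in c..d, |truncPow α (x + t) - truncPow α x|
      = (2 * t ^ (α + 1) - ((d + t) ^ (α + 1) - d ^ (α + 1))) / (α + 1) := by
  have hi := truncPow_intervalIntegrable_abs_increment hα t
  rw [← integral_add_adjacent_intervals (hi c (-t)) (hi (-t) d),
    ← integral_add_adjacent_intervals (hi (-t) 0) (hi 0 d)]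
  have left : ∫ x in c..(-t), |truncPow α (x + t) - truncPow α x| = 0 := by
    refine (integral_congr fun x hx => ?_).trans integral_zero
    rw [Set.uIcc_of_le hc] at hx
    simp [truncPow_of_nonpos (show x + t ≤ 0 by linarith [hx.2]),
      truncPow_of_nonpos (show x ≤ 0 by linarith [hx.2])]
  have middle : ∫ x in (-t)..0, |truncPow α (x + t) - truncPow α x| = t ^ (α + 1) / (α + 1) := by
    have : ∫ x in (-t)..0, |truncPow α (x + t) - truncPow α x|
        = ∫ x in (-t)..0, truncPow α (x + t) := by
      refine integral_congr fun x hx => ?_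
      rw [Set.uIcc_of_le (by linarith)] at hx
      simp [truncPow_of_nonpos hx.2, abs_of_nonneg (truncPow_nonneg _)]
    rw [this, integral_comp_add_right, neg_add_cancel, zero_add,
      truncPow_integral_of_nonneg hα le_rfl ht, Real.zero_rpow (by linarith), sub_zero]
  have right : ∫ x in (0:ℝ)..d, |truncPow α (x + t) - truncPow α x|
      = ∫ x in (0:ℝ)..d, (truncPow α x - truncPow α (x + t)) := by
    refine integral_congr_ae (Filter.Eventually.of_forall fun x hx => ?_)
    rw [Set.uIoc_of_le hd] at hx
    rw [abs_sub_comm, abs_of_nonneg (sub_nonneg.2 ?_)]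
    rw [truncPow_of_pos hx.1, truncPow_of_pos (by linarith [hx.1])]
    exact Real.rpow_le_rpow_of_nonpos hx.1 (by linarith) hα0
  have hi' := truncPow_intervalIntegrable hα
  rw [left, middle, right,
    integral_sub (hi' 0 d) (by simpa using (hi' t (d + t)).comp_add_right t),
    integral_comp_add_right, truncPow_integral_of_nonneg hα le_rfl hd, zero_add t,
    truncPow_integral_of_nonneg hα ht (by linarith), Real.zero_rpow (by linarith)]
  ring

lemma truncPow_integral_abs_increment_le (hα : -1 < α) (hα0 : α ≤ 0) {t a b : ℝ} (ht : 0 ≤ t)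
    (hab : a ≤ b) :
    ∫ x in a..b, |truncPow α (x + t) - truncPow α x| ≤ 2 / (α + 1) * t ^ (α + 1) := by
  have hp : 0 < α + 1 := by linarith
  set d := max b 0
  calc ∫ x in a..b, |truncPow α (x + t) - truncPow α x|
      ≤ ∫ x in (min a (-t))..d, |truncPow α (x + t) - truncPow α x| :=
        integral_mono_interval (min_le_left _ _) hab (le_max_left _ _)
          (Filter.Eventually.of_forall fun _ => abs_nonneg _)
          (truncPow_intervalIntegrable_abs_increment hα t _ _)
    _ = (2 * t ^ (α + 1) - ((d + t) ^ (α + 1) - d ^ (α + 1))) / (α + 1) :=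
        truncPow_integral_abs_increment hα hα0 ht (min_le_right _ _) (le_max_right _ _)
    _ ≤ 2 / (α + 1) * t ^ (α + 1) := by
        have : d ^ (α + 1) ≤ (d + t) ^ (α + 1) :=
          Real.rpow_le_rpow (le_max_right _ _) (by linarith) hp.le
        rw [div_mul_eq_mul_div]
        gcongr
        linarith

end truncPow

/-- Increment estimates for the singular fBm Volterra kernel `K₁(t,s) = (t-s)^{H-1/2} 1_{s<t}`:
both `sup_u ∫₀^{1-t} |K₁(s+t,u)-K₁(s,u)| ds` and `sup_s ∫₀^1 |K₁(s+t,u)-K₁(s,u)| du`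
are `O(t^{H+1/2})` as `t → 0⁺`. -/
theorem stmt_12 (H : ℝ) (h0 : 0 < H) (h1 : H < 1/2)
    (K₁ : ℝ → ℝ → ℝ)
    (hK : ∀ t s, K₁ t s = if s < t then (t - s) ^ (H - 1/2) else 0) :
    ∃ C : ℝ, 0 < C ∧ ∀ t : ℝ, 0 < t → t < 1 →
      (∀ u ∈ Set.Icc (0:ℝ) 1,
        (∫ s in (0:ℝ)..(1 - t), |K₁ (s + t) u - K₁ s u|) ≤ C * t ^ (H + 1/2)) ∧
      (∀ s ∈ Set.Icc (0:ℝ) (1 - t),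
        (∫ u in (0:ℝ)..1, |K₁ (s + t) u - K₁ s u|) ≤ C * t ^ (H + 1/2)) := by
  have hα : -1 < H - 1/2 := by linarith
  have hα0 : H - 1/2 ≤ 0 := by linarith
  have hK' : ∀ t s, K₁ t s = truncPow (H - 1/2) (t - s) := fun t s => by
    simp [hK, truncPow, Set.indicator_apply]
  rw [show H + 1/2 = H - 1/2 + 1 by ring]
  refine ⟨2 / (H - 1/2 + 1), div_pos two_pos (by linarith),
    fun t ht ht1 => ⟨fun u _ => ?_, fun s _ => ?_⟩⟩
  · simp_rw [hK', show ∀ s, s + t - u = s - u + t from fun s => by ring]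
    rw [integral_comp_sub_right (fun x => |truncPow (H - 1/2) (x + t) - truncPow (H - 1/2) x|)]
    exact truncPow_integral_abs_increment_le hα hα0 ht.le (by linarith)
  · simp_rw [hK', show ∀ u, s + t - u = s - u + t from fun u => by ring]
    rw [integral_comp_sub_left (fun x => |truncPow (H - 1/2) (x + t) - truncPow (H - 1/2) x|)]
    exact truncPow_integral_abs_increment_le hα hα0 ht.le (by linarith)
end

section
/- Let H ∈ (0,1/2), K_1(t,s) = (t-s)^{H-1/2} 1_{s<t}, and for g ∈ L^2[0,1] set h_1(t) = ∫_0^t K_1(t,s) g(s) ds. Then ∫_0^{1-t} |h_1(s+t) - h_1(s)|² ds ≤ C |g|_{L²}² t^{1+2H} for all t ∈ (0,1), with C depending only on H. -/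
/-
Put `K(x) = x₊^(H - 1/2)`. For `s ∈ (0, 1 - t]` the increment is
`h₁(s + t) - h₁(s) = ∫₀¹ k(s, u) g(u) du` with `k(s, u) = K(s + t - u) - K(s - u)`.
By translation invariance, both `∫ |k(s, ·)|` and `∫ |k(·, u)|` are at most
`∫_ℝ |K(x + t) - K(x)| dx ≤ 2 t^(H + 1/2) / (H + 1/2)`: on `(-t, 0]` only `K(x + t)` survives,
and on `(0, ∞)` the integrand `K(x) - K(x + t)` telescopes. The Schur test (Cauchy–Schwarz
against the weight `|k(s, ·)|`, then Tonelli) bounds the squared `L²` norm of the increment by the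
product of the row and column bounds times `‖g‖₂²`.
-/

open MeasureTheory Set Function
open scoped ENNReal NNReal

section SchurTest

variable {α β : Type*} [MeasurableSpace α] [MeasurableSpace β] {μ : Measure α} {ν : Measure β}

lemma ENNReal.lintegral_mul_sq_le {w f : β → ℝ≥0∞} (hw : AEMeasurable w ν)
    (hf : AEMeasurable f ν) :
    (∫⁻ u, w u * f u ∂ν) ^ 2 ≤ (∫⁻ u, w u ∂ν) * ∫⁻ u, w u * f u ^ 2 ∂ν := by
  have hhalf : ∀ x : ℝ≥0∞, x ^ (1 / 2 : ℝ) * x ^ (1 / 2 : ℝ) = x := fun x => by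
    rw [← ENNReal.rpow_add_of_nonneg _ _ (by norm_num) (by norm_num)]; norm_num
  have hsqrt : ∀ x : ℝ≥0∞, (x ^ 2) ^ (1 / 2 : ℝ) = x := fun x => by
    rw [← ENNReal.rpow_natCast, ← ENNReal.rpow_mul]; norm_num
  have hCS := ENNReal.lintegral_mul_norm_pow_le hw (hw.mul (hf.pow_const 2))
    (p := 1 / 2) (q := 1 / 2) (by norm_num) (by norm_num) (by norm_num)
  have hpoint : ∀ u, w u ^ (1 / 2 : ℝ) * (w u * f u ^ 2) ^ (1 / 2 : ℝ) = w u * f u := fun u => by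
    rw [ENNReal.mul_rpow_of_nonneg _ _ (by norm_num), hsqrt, ← mul_assoc, hhalf]
  simp only [Pi.mul_apply, hpoint] at hCS
  calc (∫⁻ u, w u * f u ∂ν) ^ 2
      ≤ ((∫⁻ u, w u ∂ν) ^ (1 / 2 : ℝ) * (∫⁻ u, w u * f u ^ 2 ∂ν) ^ (1 / 2 : ℝ)) ^ 2 := by
        gcongr
    _ = (∫⁻ u, w u ∂ν) * ∫⁻ u, w u * f u ^ 2 ∂ν := by
        rw [mul_pow, sq, sq, hhalf, hhalf]

variable [SFinite μ] [SFinite ν]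

lemma ENNReal.lintegral_sq_lintegral_mul_le {K : α → β → ℝ≥0∞} (hK : Measurable (uncurry K))
    {f : β → ℝ≥0∞} (hf : AEMeasurable f ν) {A B : ℝ≥0∞} (hA : ∀ᵐ s ∂μ, ∫⁻ u, K s u ∂ν ≤ A)
    (hB : ∀ᵐ u ∂ν, ∫⁻ s, K s u ∂μ ≤ B) :
    ∫⁻ s, (∫⁻ u, K s u * f u ∂ν) ^ 2 ∂μ ≤ A * B * ∫⁻ u, f u ^ 2 ∂ν := by
  have hKf : AEMeasurable (uncurry fun s u => K s u * f u ^ 2) (μ.prod ν) :=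
    hK.aemeasurable.mul (hf.pow_const 2).comp_snd
  calc ∫⁻ s, (∫⁻ u, K s u * f u ∂ν) ^ 2 ∂μ
      ≤ ∫⁻ s, A * ∫⁻ u, K s u * f u ^ 2 ∂ν ∂μ := by
        refine lintegral_mono_ae (hA.mono fun s hs => ?_)
        exact (lintegral_mul_sq_le hK.of_uncurry_left.aemeasurable hf).trans
          (by gcongr)
    _ = A * ∫⁻ u, (∫⁻ s, K s u ∂μ) * f u ^ 2 ∂ν := by
        rw [lintegral_const_mul'' _ hKf.lintegral_prod_right, lintegral_lintegral_swap hKf]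
        simp_rw [lintegral_mul_const _ hK.of_uncurry_right]
    _ ≤ A * ∫⁻ u, B * f u ^ 2 ∂ν := by
        gcongr 1
        exact lintegral_mono_ae (hB.mono fun u hu => by gcongr)
    _ = A * B * ∫⁻ u, f u ^ 2 ∂ν := by
        rw [lintegral_const_mul'' _ (hf.pow_const 2), mul_assoc]

lemma integral_sq_integral_mul_le {k : α → β → ℝ} (hk : Measurable (uncurry k)) {g : β → ℝ}
    (hg : MemLp g 2 ν) {A B : ℝ≥0} (hA : ∀ᵐ s ∂μ, ∫⁻ u, ‖k s u‖ₑ ∂ν ≤ A)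
    (hB : ∀ᵐ u ∂ν, ∫⁻ s, ‖k s u‖ₑ ∂μ ≤ B) :
    ∫ s, (∫ u, k s u * g u ∂ν) ^ 2 ∂μ ≤ A * B * ∫ u, g u ^ 2 ∂ν := by
  have hsq (x : ℝ) : ENNReal.ofReal (x ^ 2) = ‖x‖ₑ ^ 2 := by
    rw [Real.enorm_eq_ofReal_abs, ← ENNReal.ofReal_pow (abs_nonneg x), sq_abs]
  have hψ : AEStronglyMeasurable (fun s => ∫ u, k s u * g u ∂ν) μ :=
    (hk.aestronglyMeasurable.mul hg.1.comp_snd).integral_prod_right'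
  rw [integral_eq_lintegral_of_nonneg_ae (ae_of_all _ fun s => sq_nonneg _) (hψ.pow 2)]
  refine ENNReal.toReal_le_of_le_ofReal
    (mul_nonneg (by positivity) (integral_nonneg fun u => sq_nonneg _)) ?_
  calc ∫⁻ s, ENNReal.ofReal ((∫ u, k s u * g u ∂ν) ^ 2) ∂μ
      ≤ ∫⁻ s, (∫⁻ u, ‖k s u‖ₑ * ‖g u‖ₑ ∂ν) ^ 2 ∂μ := lintegral_mono fun s => by
        rw [hsq]
        gcongr
        simpa only [enorm_mul] using enorm_integral_le_lintegral_enorm (fun u => k s u * g u)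
    _ ≤ A * B * ∫⁻ u, ‖g u‖ₑ ^ 2 ∂ν :=
        ENNReal.lintegral_sq_lintegral_mul_le hk.enorm hg.1.enorm hA hB
    _ = ENNReal.ofReal (A * B * ∫ u, g u ^ 2 ∂ν) := by
        rw [ENNReal.ofReal_mul (by positivity), ENNReal.ofReal_mul (by positivity),
          ENNReal.ofReal_coe_nnreal, ENNReal.ofReal_coe_nnreal,
          ofReal_integral_eq_lintegral_ofReal hg.integrable_sq (ae_of_all _ fun u => sq_nonneg _)]
        simp_rw [hsq]

end SchurTest

/-- `x₊ ^ a`: the Volterra kernel is `K₁(t, s) = posRpow (H - 1/2) (t - s)`. -/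
noncomputable def posRpow (a x : ℝ) : ℝ := if 0 < x then x ^ a else 0

namespace posRpow

variable {a x : ℝ}

lemma of_pos (hx : 0 < x) : posRpow a x = x ^ a := if_pos hx

lemma of_nonpos (hx : x ≤ 0) : posRpow a x = 0 := if_neg hx.not_gt

lemma nonneg (a x : ℝ) : 0 ≤ posRpow a x := by
  unfold posRpow; split_ifs <;> positivity

@[fun_prop]
lemma measurable (a : ℝ) : Measurable (posRpow a) :=
  Measurable.ite measurableSet_Ioi (measurable_id.pow_const a) measurable_const

lemma antitoneOn (ha : a ≤ 0) : AntitoneOn (posRpow a) (Ioi 0) := fun x hx y _ hxy => by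
  rw [of_pos hx, of_pos (hx.trans_le hxy)]
  exact Real.rpow_le_rpow_of_nonpos hx hxy ha

lemma sq_eq (a x : ℝ) : posRpow a x ^ 2 = posRpow (2 * a) x := by
  rcases lt_or_ge 0 x with hx | hx
  · rw [of_pos hx, of_pos hx, ← Real.rpow_natCast, ← Real.rpow_mul hx.le, mul_comm]
    norm_num
  · simp [of_nonpos hx]

lemma integral_of_nonneg (ha : -1 < a) {b : ℝ} (hb : 0 ≤ b) :
    ∫ x in (0:ℝ)..b, posRpow a x = b ^ (a + 1) / (a + 1) := by
  have hEq : ∀ x ∈ uIoc 0 b, posRpow a x = x ^ a := fun x hx => of_pos (uIoc_of_le hb ▸ hx).1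
  rw [intervalIntegral.integral_congr_ae (ae_of_all _ hEq), integral_rpow (Or.inl ha),
    Real.zero_rpow (by linarith), sub_zero]

lemma intervalIntegrable (ha : -1 < a) (b c : ℝ) : IntervalIntegrable (posRpow a) volume b c := by
  suffices h : ∀ c, IntervalIntegrable (posRpow a) volume 0 c from (h b).symm.trans (h c)
  intro c
  rcases le_total c 0 with hc | hc
  · exact intervalIntegrable_const.congr_ae (ae_restrict_of_forall_mem measurableSet_uIoc
      fun x hx => (of_nonpos (uIoc_of_ge hc ▸ hx).2).symm)
  · exact (intervalIntegral.intervalIntegrable_rpow' ha).congr_ae (ae_restrict_of_forall_mem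
      measurableSet_uIoc fun x hx => (of_pos (uIoc_of_le hc ▸ hx).1).symm)

lemma intervalIntegrable_comp_add (ha : -1 < a) (t b c : ℝ) :
    IntervalIntegrable (fun x => posRpow a (x + t)) volume b c :=
  (IntervalIntegrable.comp_add_right_iff (by simp)).2 (intervalIntegrable ha _ _)

lemma intervalIntegrable_abs_sub_comp_add (ha : -1 < a) (t b c : ℝ) :
    IntervalIntegrable (fun x => |posRpow a (x + t) - posRpow a x|) volume b c :=
  ((intervalIntegrable_comp_add ha t b c).sub (intervalIntegrable ha b c)).abs

lemma integral_abs_sub_comp_add (ha : -1 < a) (ha0 : a ≤ 0) {t R : ℝ} (ht : 0 ≤ t)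
    (hR : 0 ≤ R) :
    ∫ x in -t..R, |posRpow a (x + t) - posRpow a x| =
      (2 * t ^ (a + 1) + R ^ (a + 1) - (R + t) ^ (a + 1)) / (a + 1) := by
  have habs := intervalIntegrable_abs_sub_comp_add ha t
  have hneg : ∫ x in -t..0, |posRpow a (x + t) - posRpow a x| =
      ∫ x in -t..0, posRpow a (x + t) := by
    refine intervalIntegral.integral_congr_ae (ae_of_all _ fun x hx => ?_)
    rw [uIoc_of_le (by linarith)] at hx
    rw [of_nonpos hx.2, sub_zero, abs_of_nonneg (nonneg _ _)]
  have hpos : ∫ x in (0:ℝ)..R, |posRpow a (x + t) - posRpow a x| =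
      ∫ x in (0:ℝ)..R, (posRpow a x - posRpow a (x + t)) := by
    refine intervalIntegral.integral_congr_ae (ae_of_all _ fun x hx => ?_)
    rw [uIoc_of_le hR] at hx
    have hx₀ : (0:ℝ) < x := hx.1
    rw [abs_sub_comm, abs_of_nonneg (sub_nonneg.2 <| antitoneOn ha0 hx₀
      (by simp only [mem_Ioi]; linarith) (le_add_of_nonneg_right ht))]
  rw [← intervalIntegral.integral_add_adjacent_intervals (habs (-t) 0) (habs 0 R), hneg, hpos,
    intervalIntegral.integral_sub (intervalIntegrable ha 0 R)
      (intervalIntegrable_comp_add ha t 0 R),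
    intervalIntegral.integral_comp_add_right, intervalIntegral.integral_comp_add_right,
    neg_add_cancel, zero_add, ← intervalIntegral.integral_interval_sub_left
      (intervalIntegrable ha 0 (R + t)) (intervalIntegrable ha 0 t),
    integral_of_nonneg ha ht, integral_of_nonneg ha hR, integral_of_nonneg ha (by linarith)]
  ring

lemma lintegral_enorm_sub_comp_add_le (ha : -1 < a) (ha0 : a ≤ 0) {t : ℝ} (ht : 0 ≤ t) :
    ∫⁻ x, ‖posRpow a (x + t) - posRpow a x‖ₑ ≤ ENNReal.ofReal (2 * t ^ (a + 1) / (a + 1)) := by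
  have hIic (R : ℝ) (hR : 0 ≤ R) : ∫⁻ x in Iic R, ‖posRpow a (x + t) - posRpow a x‖ₑ ≤
      ENNReal.ofReal (2 * t ^ (a + 1) / (a + 1)) := by
    have hzero : ∫⁻ x in Iic (-t), ‖posRpow a (x + t) - posRpow a x‖ₑ = 0 := by
      refine setLIntegral_eq_zero measurableSet_Iic fun x (hx : x ≤ -t) => ?_
      simp [of_nonpos (by linarith : x + t ≤ 0), of_nonpos (by linarith : x ≤ 0)]
    have hint : IntegrableOn (fun x => |posRpow a (x + t) - posRpow a x|) (Ioc (-t) R) :=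
      (intervalIntegrable_iff_integrableOn_Ioc_of_le (by linarith)).1
        (intervalIntegrable_abs_sub_comp_add ha t _ _)
    rw [← Iic_union_Ioc_eq_Iic (by linarith : -t ≤ R), lintegral_union measurableSet_Ioc
      (Iic_disjoint_Ioc le_rfl), hzero, zero_add]
    simp_rw [Real.enorm_eq_ofReal_abs]
    rw [← ofReal_integral_eq_lintegral_ofReal hint (ae_of_all _ fun _ => abs_nonneg _),
      ← intervalIntegral.integral_of_le (by linarith), integral_abs_sub_comp_add ha ha0 ht hR]
    refine ENNReal.ofReal_le_ofReal (div_le_div_of_nonneg_right ?_ (by linarith))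
    linarith [Real.rpow_le_rpow hR (le_add_of_nonneg_right ht) (by linarith : 0 ≤ a + 1)]
  have hcover : ⋃ n : ℕ, Iic (n : ℝ) = univ :=
    iUnion_Iic_of_not_bddAbove_range fun ⟨M, hM⟩ =>
      (exists_nat_gt M).elim fun n hn => hn.not_ge (hM ⟨n, rfl⟩)
  rw [← setLIntegral_univ, ← hcover, setLIntegral_iUnion_of_directed _
    (Monotone.directed_le fun m n hmn => Iic_subset_Iic.2 (Nat.cast_le.2 hmn))]
  exact iSup_le fun n => hIic n n.cast_nonneg

lemma memLp_two_comp_sub (h2a : -1 < 2 * a) (c b₁ b₂ : ℝ) :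
    MemLp (fun u => posRpow a (c - u)) 2 (volume.restrict (Ioc b₁ b₂)) := by
  refine (memLp_two_iff_integrable_sq
    (by fun_prop : Measurable fun u => posRpow a (c - u)).aestronglyMeasurable).2 ?_
  have h := (intervalIntegrable h2a (c - b₁) (c - b₂)).comp_sub_left c
  rw [sub_sub_cancel, sub_sub_cancel] at h
  simpa only [sq_eq, IntegrableOn] using h.def'.mono_set Ioc_subset_uIoc

lemma integrableOn_comp_sub_mul (h2a : -1 < 2 * a) {g : ℝ → ℝ} {b₁ b₂ : ℝ}
    (hg : MemLp g 2 (volume.restrict (Ioc b₁ b₂))) (c : ℝ) :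
    IntegrableOn (fun u => posRpow a (c - u) * g u) (Ioc b₁ b₂) :=
  (memLp_two_comp_sub h2a c b₁ b₂).integrable_mul hg

lemma intervalIntegral_comp_sub_mul_eq_setIntegral (g : ℝ → ℝ) {b c r : ℝ} (hbr : b ≤ r)
    (hrc : r ≤ c) :
    ∫ u in b..r, posRpow a (r - u) * g u = ∫ u in Ioc b c, posRpow a (r - u) * g u := by
  rw [intervalIntegral.integral_of_le hbr, setIntegral_eq_of_subset_of_forall_sdiff_eq_zero
    measurableSet_Ioc (Ioc_subset_Ioc_right hrc) fun u hu => ?_]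
  have hru : r < u := lt_of_not_ge fun h => hu.2 ⟨hu.1.1, h⟩
  rw [of_nonpos (by linarith), zero_mul]

end posRpow

noncomputable def kernelIncrement (a t s u : ℝ) : ℝ := posRpow a (s + t - u) - posRpow a (s - u)

namespace kernelIncrement

variable {a t : ℝ}

lemma measurable_uncurry (a t : ℝ) : Measurable (uncurry (kernelIncrement a t)) := by
  unfold kernelIncrement; fun_prop

lemma setLIntegral_enorm_row_le (ha : -1 < a) (ha0 : a ≤ 0) (ht : 0 ≤ t) (S : Set ℝ) (s : ℝ) :
    ∫⁻ u in S, ‖kernelIncrement a t s u‖ₑ ≤ ENNReal.ofReal (2 * t ^ (a + 1) / (a + 1)) :=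
  calc ∫⁻ u in S, ‖kernelIncrement a t s u‖ₑ
      ≤ ∫⁻ u, ‖posRpow a (s - u + t) - posRpow a (s - u)‖ₑ := by
        simp_rw [kernelIncrement, sub_add_eq_add_sub]; exact setLIntegral_le_lintegral _ _
    _ = ∫⁻ x, ‖posRpow a (x + t) - posRpow a x‖ₑ :=
        lintegral_sub_left_eq_self (fun x => ‖posRpow a (x + t) - posRpow a x‖ₑ) s
    _ ≤ _ := posRpow.lintegral_enorm_sub_comp_add_le ha ha0 ht

lemma setLIntegral_enorm_col_le (ha : -1 < a) (ha0 : a ≤ 0) (ht : 0 ≤ t) (S : Set ℝ) (u : ℝ) :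
    ∫⁻ s in S, ‖kernelIncrement a t s u‖ₑ ≤ ENNReal.ofReal (2 * t ^ (a + 1) / (a + 1)) :=
  calc ∫⁻ s in S, ‖kernelIncrement a t s u‖ₑ
      ≤ ∫⁻ s, ‖posRpow a (s - u + t) - posRpow a (s - u)‖ₑ := by
        simp_rw [kernelIncrement, sub_add_eq_add_sub]; exact setLIntegral_le_lintegral _ _
    _ = ∫⁻ x, ‖posRpow a (x + t) - posRpow a x‖ₑ :=
        lintegral_sub_right_eq_self (fun x => ‖posRpow a (x + t) - posRpow a x‖ₑ) u
    _ ≤ _ := posRpow.lintegral_enorm_sub_comp_add_le ha ha0 ht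

lemma setIntegral_mul_eq_sub (h2a : -1 < 2 * a) {g : ℝ → ℝ} {b c s : ℝ}
    (hg : MemLp g 2 (volume.restrict (Ioc b c))) (hs : b ≤ s) (ht : 0 ≤ t) (hst : s + t ≤ c) :
    ∫ u in Ioc b c, kernelIncrement a t s u * g u =
      (∫ u in b..s + t, posRpow a (s + t - u) * g u) - ∫ u in b..s, posRpow a (s - u) * g u := by
  rw [posRpow.intervalIntegral_comp_sub_mul_eq_setIntegral g (by linarith) hst,
    posRpow.intervalIntegral_comp_sub_mul_eq_setIntegral g hs (by linarith),
    ← integral_sub (posRpow.integrableOn_comp_sub_mul h2a hg _)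
      (posRpow.integrableOn_comp_sub_mul h2a hg _)]
  simp_rw [kernelIncrement, sub_mul]

end kernelIncrement

/-- L²-modulus of continuity for the singular part of the fBm Volterra operator:
`∫₀^{1-t} |h₁(s+t) - h₁(s)|² ds ≤ C |g|_{L²}² t^{1+2H}`. -/
theorem stmt_13 (H : ℝ) (h0 : 0 < H) (h1 : H < 1/2) :
    ∃ C : ℝ, 0 < C ∧ ∀ g : ℝ → ℝ,
      MemLp g 2 (volume.restrict (Set.Icc (0:ℝ) 1)) →
      ∀ h₁ : ℝ → ℝ,
      (∀ t, h₁ t = ∫ s in (0:ℝ)..t, (if s < t then (t - s) ^ (H - 1/2) else 0) * g s) →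
      ∀ t : ℝ, 0 < t → t < 1 →
        (∫ s in (0:ℝ)..(1 - t), |h₁ (s + t) - h₁ s| ^ 2) ≤
          C * (∫ s in (0:ℝ)..1, g s ^ 2) * t ^ (1 + 2 * H) := by
  set a := H - 1/2 with ha_def
  have ha : -1 < a := by linarith
  have ha0 : a ≤ 0 := by linarith
  have ha1 : 0 < a + 1 := by linarith
  refine ⟨(2 / (a + 1)) ^ 2, by positivity, fun g hg h₁ hh₁ t ht0 ht1 => ?_⟩
  have hg' : MemLp g 2 (volume.restrict (Ioc 0 1)) :=
    hg.mono_measure (Measure.restrict_mono Ioc_subset_Icc_self le_rfl)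
  have hh₁' (r : ℝ) : h₁ r = ∫ u in (0:ℝ)..r, posRpow a (r - u) * g u := by
    simp_rw [hh₁, posRpow, sub_pos]
  set B := (2 * t ^ (a + 1) / (a + 1)).toNNReal
  have hB : (B : ℝ) = 2 * t ^ (a + 1) / (a + 1) := Real.coe_toNNReal _ (by positivity)
  calc ∫ s in (0:ℝ)..(1 - t), |h₁ (s + t) - h₁ s| ^ 2
      = ∫ s in Ioc 0 (1 - t), (∫ u in Ioc 0 1, kernelIncrement a t s u * g u) ^ 2 := by
        rw [intervalIntegral.integral_of_le (by linarith)]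
        refine setIntegral_congr_fun measurableSet_Ioc fun s hs => ?_
        rw [sq_abs, hh₁', hh₁', kernelIncrement.setIntegral_mul_eq_sub (by linarith) hg' hs.1.le
          ht0.le (by linarith [hs.2])]
    _ ≤ B * B * ∫ u in Ioc 0 1, g u ^ 2 :=
        integral_sq_integral_mul_le (kernelIncrement.measurable_uncurry a t) hg'
          (ae_of_all _ (kernelIncrement.setLIntegral_enorm_row_le ha ha0 ht0.le _))
          (ae_of_all _ (kernelIncrement.setLIntegral_enorm_col_le ha ha0 ht0.le _))
    _ = (2 / (a + 1)) ^ 2 * (∫ s in (0:ℝ)..1, g s ^ 2) * t ^ (1 + 2 * H) := by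
        rw [intervalIntegral.integral_of_le zero_le_one, hB,
          show 1 + 2 * H = (a + 1) + (a + 1) by ring, Real.rpow_add ht0 (a + 1)]
        ring
end
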